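/- arXiv:math/0304136 — 9 statements merged into one kernel-verified Lean document; each statement's English description precedes it below -/
import Mathlib

section
/- Let m ≥ 3 and let q ∈ ℂ be a primitive m-th root of unity. Let (K, E, F) be an irreducible representation of U_q(sl(2)) of dimension N ≥ 1. Then the matrix K is diagonalizable over ℂ, and there exists λ ∈ ℂ, λ ≠ 0, such that every eigenvalue of K equals λ·q^p for some integer 0 ≤ p ≤ m−1; consequently ℂ^N is the direct sum of the eigenspaces of K associated to the eigenvalues λ·q^p, p ∈ ℤ/mℤ. -/
open Matrix

noncomputable section

/-- A representation of `U_q(sl(2))` of dimension `N`: a triple `(K, E, F)` of `N×N`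
complex matrices with `K` invertible satisfying the defining relations. -/
def IsRep (q : ℂ) {N : ℕ} (K E F : Matrix (Fin N) (Fin N) ℂ) : Prop :=
  IsUnit K ∧
  K * E * K⁻¹ = q • E ∧
  K * F * K⁻¹ = q⁻¹ • F ∧
  E * F - F * E = (q - q⁻¹)⁻¹ • (K ^ 2 - K⁻¹ ^ 2)

/-- A subspace invariant under the three matrices `K`, `E`, `F`. -/
def InvariantSub {N : ℕ} (K E F : Matrix (Fin N) (Fin N) ℂ)
    (W : Submodule ℂ (Fin N → ℂ)) : Prop :=
  (∀ v ∈ W, K.mulVec v ∈ W) ∧ (∀ v ∈ W, E.mulVec v ∈ W) ∧ (∀ v ∈ W, F.mulVec v ∈ W)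

/-- An irreducible representation of `U_q(sl(2))` of dimension `N`. -/
def IsIrrep (q : ℂ) {N : ℕ} (K E F : Matrix (Fin N) (Fin N) ℂ) : Prop :=
  IsRep q K E F ∧ 1 ≤ N ∧
  ∀ W : Submodule ℂ (Fin N → ℂ), InvariantSub K E F W → W = ⊥ ∨ W = ⊤

/-!
Since `q ^ m = 1`, the relation `K E = q E K` gives `K ^ m E = E K ^ m`, and likewise for `F`;
so `K ^ m` commutes with the whole representation and Schur's lemma makes it a scalar `c`,
nonzero because `K` is invertible. Hence `K` is annihilated by the separable polynomial
`X ^ m - c`: it is diagonalizable, and its eigenvalues are `m`-th roots of `c`, that is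
`λ q ^ p` for any fixed `m`-th root `λ` of `c`.
-/

open Module Module.End Polynomial

section ScalarCommutation

variable {R A : Type*} [CommSemiring R] [Semiring A] [Algebra R A] {q : R} {k e : A}

theorem pow_mul_eq_smul_mul_pow (h : k * e = q • (e * k)) (n : ℕ) :
    k ^ n * e = q ^ n • (e * k ^ n) := by
  induction n with
  | zero => simp
  | succ n ih =>
    rw [pow_succ, mul_assoc, h, mul_smul_comm, ← mul_assoc, ih, smul_mul_assoc, smul_smul,
      mul_assoc, pow_succ']

theorem commute_pow_of_mul_eq_smul_mul {n : ℕ} (h : k * e = q • (e * k)) (hq : q ^ n = 1) :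
    Commute (k ^ n) e := by
  rw [Commute, SemiconjBy, pow_mul_eq_smul_mul_pow h, hq, one_smul]

end ScalarCommutation

theorem Matrix.mul_eq_smul_mul_of_mul_mul_inv_eq_smul {n R : Type*} [Fintype n]
    [DecidableEq n] [CommRing R] {K E : Matrix n n R} {q : R} (hK : IsUnit K)
    (h : K * E * K⁻¹ = q • E) :
    K * E = q • (E * K) := by
  rw [← smul_mul_assoc, ← h,
    nonsing_inv_mul_cancel_right _ _ ((isUnit_iff_isUnit_det K).mp hK)]

theorem exists_eq_smul_one_of_commute_of_irreducible {N : ℕ} [NeZero N]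
    {K E F A : Matrix (Fin N) (Fin N) ℂ}
    (hirr : ∀ W : Submodule ℂ (Fin N → ℂ), InvariantSub K E F W → W = ⊥ ∨ W = ⊤)
    (hK : Commute A K) (hE : Commute A E) (hF : Commute A F) :
    ∃ c : ℂ, A = c • 1 := by
  obtain ⟨c, hc⟩ := exists_eigenvalue A.mulVecLin
  have hinv {B : Matrix (Fin N) (Fin N) ℂ} (hB : Commute A B) :
      ∀ v ∈ eigenspace A.mulVecLin c, B *ᵥ v ∈ eigenspace A.mulVecLin c :=
    fun _ hv ↦ mapsTo_genEigenspace_of_comm (hB.map toLinAlgEquiv') c 1 hv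
  rcases hirr _ ⟨hinv hK, hinv hE, hinv hF⟩ with hbot | htop
  · exact absurd hbot hc
  · refine ⟨c, toLin'.injective (LinearMap.ext fun v ↦ ?_)⟩
    have hv : v ∈ eigenspace A.mulVecLin c := htop ▸ Submodule.mem_top
    simpa [toLin'_apply, smul_mulVec] using mem_eigenspace_iff.mp hv

theorem IsIrrep.exists_pow_eq_smul_one {q : ℂ} {N m : ℕ} {K E F : Matrix (Fin N) (Fin N) ℂ}
    (h : IsIrrep q K E F) (hq : q ^ m = 1) : ∃ c : ℂ, c ≠ 0 ∧ K ^ m = c • 1 := by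
  obtain ⟨⟨hK, hKE, hKF, -⟩, hN, hirr⟩ := h
  have : NeZero N := ⟨by omega⟩
  obtain ⟨c, hc⟩ := exists_eq_smul_one_of_commute_of_irreducible hirr
    (Commute.self_pow K m).symm
    (commute_pow_of_mul_eq_smul_mul (mul_eq_smul_mul_of_mul_mul_inv_eq_smul hK hKE) hq)
    (commute_pow_of_mul_eq_smul_mul (mul_eq_smul_mul_of_mul_mul_inv_eq_smul hK hKF)
      (by rw [inv_pow, hq, inv_one]))
  refine ⟨c, ?_, hc⟩
  rintro rfl
  have hKm := hK.pow m
  rw [hc, zero_smul] at hKm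
  exact not_isUnit_zero hKm

section Eigenvalues

variable {K V : Type*} [Field K] [AddCommGroup V] [Module K V] {f : End K V} {m : ℕ} {c : K}

theorem Module.End.HasEigenvalue.pow_eq_of_pow_eq_algebraMap {μ : K} (hμ : f.HasEigenvalue μ)
    (hf : f ^ m = algebraMap K (End K V) c) : μ ^ m = c := by
  obtain ⟨v, hv⟩ := hμ.exists_hasEigenvector
  have h := hv.pow_apply m
  rw [hf, algebraMap_end_apply] at h
  exact (smul_left_injective K hv.2 h).symm

theorem Module.End.iSup_eigenspace_eq_top_of_pow_eq_algebraMap [IsAlgClosed K]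
    [FiniteDimensional K V] (hm : (m : K) ≠ 0) (hc : c ≠ 0)
    (hf : f ^ m = algebraMap K (End K V) c) : ⨆ μ, f.eigenspace μ = ⊤ := by
  have hann : aeval f (X ^ m - C c) = 0 := by simp [hf]
  exact (isSemisimple_of_squarefree_aeval_eq_zero
    (separable_X_pow_sub_C c hm hc).squarefree hann).iSup_eigenspace_eq_top

theorem Module.End.isInternal_eigenspace_of_iSup_eq_top {ι : Type*} [DecidableEq ι]
    {μ : ι → K} (hμ : Function.Injective μ) (htop : ⨆ a, f.eigenspace a = ⊤)
    (hcover : ∀ a, f.HasEigenvalue a → a ∈ Set.range μ) :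
    DirectSum.IsInternal fun i ↦ f.eigenspace (μ i) := by
  refine DirectSum.isInternal_submodule_of_iSupIndep_of_iSup_eq_top
    ((eigenspaces_iSupIndep f).comp hμ) (eq_top_iff.mpr (htop ▸ iSup_le fun a ↦ ?_))
  by_cases ha : f.HasEigenvalue a
  · obtain ⟨i, rfl⟩ := hcover a ha
    exact le_iSup (fun i ↦ f.eigenspace (μ i)) i
  · rw [hasEigenvalue_iff, not_not] at ha
    exact ha ▸ bot_le

end Eigenvalues

theorem IsPrimitiveRoot.exists_eq_mul_pow_of_pow_eq {K : Type*} [Field K] {ζ x y : K} {k : ℕ}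
    [NeZero k] (hζ : IsPrimitiveRoot ζ k) (hy : y ≠ 0) (hxy : x ^ k = y ^ k) :
    ∃ i < k, x = y * ζ ^ i := by
  obtain ⟨i, hi, hζi⟩ := hζ.eq_pow_of_pow_eq_one (ξ := x / y)
    (by rw [div_pow, hxy, div_self (pow_ne_zero k hy)])
  exact ⟨i, hi, by rw [hζi, mul_div_cancel₀ x hy]⟩

theorem stmt0_general (m : ℕ) (hm : 3 ≤ m) (q : ℂ) (hq : IsPrimitiveRoot q m)
    (N : ℕ) (K E F : Matrix (Fin N) (Fin N) ℂ)
    (h : IsIrrep q K E F) :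
    (⨆ μ : ℂ, Module.End.eigenspace (Matrix.mulVecLin K) μ) = ⊤ ∧
    ∃ lam : ℂ, lam ≠ 0 ∧
      (∀ μ : ℂ, Module.End.HasEigenvalue (Matrix.mulVecLin K) μ →
        ∃ p : ℕ, p ≤ m - 1 ∧ μ = lam * q ^ p) ∧
      DirectSum.IsInternal
        (fun p : Fin m =>
          Module.End.eigenspace (Matrix.mulVecLin K) (lam * q ^ (p : ℕ))) := by
  have : NeZero m := ⟨by omega⟩
  obtain ⟨c, hc0, hc⟩ := h.exists_pow_eq_smul_one hq.pow_eq_one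
  have hf : K.mulVecLin ^ m = algebraMap ℂ _ c := by
    change toLinAlgEquiv' K ^ m = _
    rw [← map_pow, hc, map_smul, map_one, Algebra.algebraMap_eq_smul_one]
  have hdiag := iSup_eigenspace_eq_top_of_pow_eq_algebraMap (by exact_mod_cast NeZero.ne m) hc0 hf
  obtain ⟨lam, hlam⟩ := IsAlgClosed.exists_pow_nat_eq c (NeZero.pos m)
  have hlam0 : lam ≠ 0 := by rintro rfl; exact hc0 (by rw [← hlam, zero_pow (NeZero.ne m)])
  have heig (μ : ℂ) (hμ : HasEigenvalue K.mulVecLin μ) : ∃ p < m, μ = lam * q ^ p :=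
    hq.exists_eq_mul_pow_of_pow_eq hlam0 (by rw [hμ.pow_eq_of_pow_eq_algebraMap hf, hlam])
  refine ⟨hdiag, lam, hlam0, fun μ hμ ↦ ?_,
    isInternal_eigenspace_of_iSup_eq_top ?_ hdiag ?_⟩
  · obtain ⟨p, hp, rfl⟩ := heig μ hμ
    exact ⟨p, by omega, rfl⟩
  · exact fun p p' hpp' ↦ Fin.ext (hq.pow_inj p.2 p'.2 (mul_left_cancel₀ hlam0 hpp'))
  · intro μ hμ
    obtain ⟨p, hp, rfl⟩ := heig μ hμ
    exact ⟨⟨p, hp⟩, rfl⟩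

/-- If `q` is a primitive `m`-th root of unity (`m ≥ 3`) and `(K, E, F)` is an irreducible
representation of `U_q(sl(2))` of dimension `N ≥ 1`, then `K` is diagonalizable and there is
`λ ≠ 0` such that every eigenvalue of `K` is of the form `λ·q^p` with `0 ≤ p ≤ m-1`;
consequently `ℂ^N` is the direct sum of the eigenspaces for `λ·q^p`, `p ∈ ℤ/m`. -/
theorem stmt0 (m : ℕ) (hm : 3 ≤ m) (q : ℂ) (hq : IsPrimitiveRoot q m)
    (N : ℕ) (hN : 1 ≤ N) (K E F : Matrix (Fin N) (Fin N) ℂ)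
    (h : IsIrrep q K E F) :
    (⨆ μ : ℂ, Module.End.eigenspace (Matrix.mulVecLin K) μ) = ⊤ ∧
    ∃ lam : ℂ, lam ≠ 0 ∧
      (∀ μ : ℂ, Module.End.HasEigenvalue (Matrix.mulVecLin K) μ →
        ∃ p : ℕ, p ≤ m - 1 ∧ μ = lam * q ^ p) ∧
      DirectSum.IsInternal
        (fun p : Fin m =>
          Module.End.eigenspace (Matrix.mulVecLin K) (lam * q ^ (p : ℕ))) :=
  stmt0_general m hm q hq N K E F h
end
end

section
/- Let m ≥ 3 and let q ∈ ℂ satisfy q^m = 1 and q² ≠ 1. Let (K, E, F) be any representation of U_q(sl(2)) of dimension N. Then each of the matrices K^m, E^m and F^m commutes with all three matrices K, E and F. -/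
open Matrix

noncomputable section

/-- The q-integer `(p)_q = (q^p - q^{-p})/(q - q⁻¹)`. -/
def qint (q : ℂ) (p : ℤ) : ℂ := (q ^ p - q ^ (-p)) / (q - q⁻¹)

lemma aux_pow {N : ℕ} (A B : Matrix (Fin N) (Fin N) ℂ) (c : ℂ)
    (h : A * B = c • (B * A)) : ∀ n : ℕ, A * B ^ n = c ^ n • (B ^ n * A) := by
  intro n
  induction n with
  | zero => simp
  | succ n ih =>
    rw [pow_succ, ← mul_assoc, ih, smul_mul_assoc, mul_assoc, h, mul_smul_comm, smul_smul]
    rw [pow_succ c, ← mul_assoc, ← pow_succ B]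

lemma basic {N : ℕ} {q : ℂ} {K E F : Matrix (Fin N) (Fin N) ℂ} (h : IsRep q K E F) :
    K⁻¹ * K = 1 ∧ K * K⁻¹ = 1 ∧ K * E = q • (E * K) ∧ K * F = q⁻¹ • (F * K) ∧
    E * K⁻¹ = q • (K⁻¹ * E) ∧ F * K⁻¹ = q⁻¹ • (K⁻¹ * F) := by
  have hdet : IsUnit K.det := (Matrix.isUnit_iff_isUnit_det K).mp h.1
  have h1 : K⁻¹ * K = 1 := Matrix.nonsing_inv_mul K hdet
  have h2 : K * K⁻¹ = 1 := Matrix.mul_nonsing_inv K hdet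
  refine ⟨h1, h2, ?_, ?_, ?_, ?_⟩
  · have := congrArg (· * K) h.2.1
    simpa [mul_assoc, h1, smul_mul_assoc] using this
  · have := congrArg (· * K) h.2.2.1
    simpa [mul_assoc, h1, smul_mul_assoc] using this
  · have := congrArg (K⁻¹ * ·) h.2.1
    simpa [← mul_assoc, h1, mul_smul_comm] using this
  · have := congrArg (K⁻¹ * ·) h.2.2.1
    simpa [← mul_assoc, h1, mul_smul_comm] using this

lemma EmF {N : ℕ} (m : ℕ) (hm : m ≠ 0) (q : ℂ) (hq0 : q ≠ 0) (hq2 : q ^ 2 ≠ 1)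
    (hqm : q ^ m = 1) {K E F : Matrix (Fin N) (Fin N) ℂ} (h : IsRep q K E F) :
    E ^ m * F = F * E ^ m := by
  obtain ⟨hKiK, hKKi, hKE, hKF, hEKi, hFKi⟩ := basic h
  have hKiE : K⁻¹ * E = q⁻¹ • (E * K⁻¹) := by
    rw [hEKi, smul_smul, inv_mul_cancel₀ hq0, one_smul]
  have hK2E : K ^ 2 * E = (q ^ 2) • (E * K ^ 2) := by
    calc K ^ 2 * E = K * (K * E) := by rw [pow_two, mul_assoc]
      _ = q • ((q • (E * K)) * K) := by rw [hKE, mul_smul_comm, ← mul_assoc, hKE]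
      _ = (q ^ 2) • (E * K ^ 2) := by
          rw [smul_mul_assoc, smul_smul, mul_assoc, ← pow_two K, ← pow_two q]
  have hKi2E : K⁻¹ ^ 2 * E = (q ^ 2)⁻¹ • (E * K⁻¹ ^ 2) := by
    calc K⁻¹ ^ 2 * E = K⁻¹ * (K⁻¹ * E) := by rw [pow_two, mul_assoc]
      _ = q⁻¹ • ((q⁻¹ • (E * K⁻¹)) * K⁻¹) := by rw [hKiE, mul_smul_comm, ← mul_assoc, hKiE]
      _ = (q ^ 2)⁻¹ • (E * K⁻¹ ^ 2) := by
          rw [smul_mul_assoc, smul_smul, mul_assoc, ← pow_two K⁻¹, ← mul_inv, ← pow_two q]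
  set c : ℂ := (q - q⁻¹)⁻¹ with hc
  have hEF : E * F = c • (K ^ 2 - K⁻¹ ^ 2) + F * E := sub_eq_iff_eq_add.mp h.2.2.2
  have key : ∀ n : ℕ, E ^ (n + 1) * F - F * E ^ (n + 1) =
      c • ((∑ j ∈ Finset.range (n + 1), (q ^ 2) ^ j) • (E ^ n * K ^ 2)
        - (∑ j ∈ Finset.range (n + 1), ((q ^ 2)⁻¹) ^ j) • (E ^ n * K⁻¹ ^ 2)) := by
    intro n
    induction n with
    | zero =>
      simp only [zero_add, pow_one, pow_zero, Finset.range_one, Finset.sum_singleton, one_smul,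
        one_mul]
      exact h.2.2.2
    | succ n ih =>
      have e2 : E ^ (n + 1) * F =
          c • ((∑ j ∈ Finset.range (n + 1), (q ^ 2) ^ j) • (E ^ n * K ^ 2)
            - (∑ j ∈ Finset.range (n + 1), ((q ^ 2)⁻¹) ^ j) • (E ^ n * K⁻¹ ^ 2))
            + F * E ^ (n + 1) := sub_eq_iff_eq_add.mp ih
      have ha := aux_pow (K ^ 2) E (q ^ 2) hK2E (n + 1)
      have hb := aux_pow (K⁻¹ ^ 2) E ((q ^ 2)⁻¹) hKi2E (n + 1)
      have hcc : E * (E ^ n * K ^ 2) = E ^ (n + 1) * K ^ 2 := by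
        rw [← mul_assoc, ← pow_succ']
      have hd : E * (E ^ n * K⁻¹ ^ 2) = E ^ (n + 1) * K⁻¹ ^ 2 := by
        rw [← mul_assoc, ← pow_succ']
      have hf : (F * E) * E ^ (n + 1) = F * (E * E ^ (n + 1)) := mul_assoc F E _
      rw [pow_succ' E (n + 1), Finset.sum_range_succ (fun j => ((q:ℂ) ^ 2) ^ j) (n + 1),
        Finset.sum_range_succ (fun j => (((q:ℂ) ^ 2)⁻¹) ^ j) (n + 1),
        mul_assoc E, e2, mul_add, ← mul_assoc E F, hEF]
      simp only [mul_add, add_mul, mul_sub, sub_mul, smul_mul_assoc, mul_smul_comm,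
        smul_sub, smul_add, smul_smul, ha, hb, hcc, hd, hf]
      module
  obtain ⟨n, rfl⟩ : ∃ n, m = n + 1 :=
    ⟨m - 1, (Nat.succ_pred_eq_of_pos (Nat.pos_of_ne_zero hm)).symm⟩
  have hq2ne : (q ^ 2 : ℂ) ≠ 0 := pow_ne_zero 2 hq0
  have hpow : ((q : ℂ) ^ 2) ^ (n + 1) = 1 := by
    rw [← pow_mul, mul_comm, pow_mul, hqm, one_pow]
  have hs1 : (∑ j ∈ Finset.range (n + 1), ((q : ℂ) ^ 2) ^ j) = 0 := by
    rw [geom_sum_eq hq2, hpow, sub_self, zero_div]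
  have hs2 : (∑ j ∈ Finset.range (n + 1), (((q : ℂ) ^ 2)⁻¹) ^ j) = 0 := by
    have h1 : ((q : ℂ) ^ 2)⁻¹ ≠ 1 := fun hh => hq2 (inv_eq_one.mp hh)
    have h2 : (((q : ℂ) ^ 2)⁻¹) ^ (n + 1) = 1 := by rw [inv_pow, hpow, inv_one]
    rw [geom_sum_eq h1, h2, sub_self, zero_div]
  have := key n
  rw [hs1, hs2, zero_smul, zero_smul, sub_self, smul_zero] at this
  exact sub_eq_zero.mp this

/-- If `q^m = 1`, `q² ≠ 1` (`m ≥ 3`), then for any representation `(K, E, F)` of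
`U_q(sl(2))`, the matrices `K^m`, `E^m` and `F^m` commute with `K`, `E` and `F`. -/
theorem stmt1 (m : ℕ) (hm : 3 ≤ m) (q : ℂ) (hqm : q ^ m = 1) (hq2 : q ^ 2 ≠ 1)
    (N : ℕ) (K E F : Matrix (Fin N) (Fin N) ℂ) (h : IsRep q K E F) :
    (Commute (K ^ m) K ∧ Commute (K ^ m) E ∧ Commute (K ^ m) F) ∧
    (Commute (E ^ m) K ∧ Commute (E ^ m) E ∧ Commute (E ^ m) F) ∧
    (Commute (F ^ m) K ∧ Commute (F ^ m) E ∧ Commute (F ^ m) F) := by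
  have hm0 : m ≠ 0 := by omega
  have hq0 : q ≠ 0 := by
    intro h0
    rw [h0, zero_pow hm0] at hqm
    exact one_ne_zero hqm.symm
  obtain ⟨hKiK, hKKi, hKE, hKF, hEKi, hFKi⟩ := basic h
  have hdet : IsUnit K.det := (Matrix.isUnit_iff_isUnit_det K).mp h.1
  have hKinv : (K⁻¹)⁻¹ = K := Matrix.nonsing_inv_nonsing_inv K hdet
  have hqminv : (q⁻¹) ^ m = 1 := by rw [inv_pow, hqm, inv_one]
  have hKiF : K⁻¹ * F = q • (F * K⁻¹) := by
    rw [hFKi, smul_smul, mul_inv_cancel₀ hq0, one_smul]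
  have hKiE : K⁻¹ * E = q⁻¹ • (E * K⁻¹) := by
    rw [hEKi, smul_smul, inv_mul_cancel₀ hq0, one_smul]
  have hEK : E * K = q⁻¹ • (K * E) := by
    rw [hKE, smul_smul, inv_mul_cancel₀ hq0, one_smul]
  have hFK : F * K = q • (K * F) := by
    rw [hKF, smul_smul, mul_inv_cancel₀ hq0, one_smul]
  have hswap : IsRep q K⁻¹ F E := by
    refine ⟨⟨⟨K⁻¹, K, hKiK, hKKi⟩, rfl⟩, ?_, ?_, ?_⟩
    · rw [hKinv, hKiF, smul_mul_assoc, mul_assoc, hKiK, mul_one]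
    · rw [hKinv, hKiE, smul_mul_assoc, mul_assoc, hKiK, mul_one]
    · rw [hKinv]
      have := congrArg Neg.neg h.2.2.2
      rw [neg_sub, ← smul_neg, neg_sub] at this
      exact this
  refine ⟨⟨(Commute.refl K).pow_left m, ?_, ?_⟩, ⟨?_, (Commute.refl E).pow_left m, ?_⟩,
    ⟨?_, ?_, (Commute.refl F).pow_left m⟩⟩
  · exact ((aux_pow E K q⁻¹ hEK m).trans (by rw [hqminv, one_smul])).symm
  · exact ((aux_pow F K q hFK m).trans (by rw [hqm, one_smul])).symm
  · exact ((aux_pow K E q hKE m).trans (by rw [hqm, one_smul])).symm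
  · exact EmF m hm0 q hq0 hq2 hqm h
  · exact ((aux_pow K F q⁻¹ hKF m).trans (by rw [hqminv, one_smul])).symm
  · exact EmF m hm0 q hq0 hq2 hqm hswap
end
end

section
/- Let m ≥ 3 and let q ∈ ℂ be a primitive m-th root of unity. Let (K, E, F) be an irreducible representation of U_q(sl(2)) of dimension N with 1 ≤ N < m. Then the representation is a highest weight representation: there exist a vector v ≠ 0 in ℂ^N and λ ∈ ℂ, λ ≠ 0, such that K·v = λ·v, E·v = 0, and the vectors v, F·v, F²·v, …, F^{N−1}·v form a basis of ℂ^N. -/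
open Matrix

noncomputable section

/-- Every irreducible representation of `U_q(sl(2))` of dimension `N < m` is a highest
weight representation: there are `v ≠ 0` and `λ ≠ 0` with `K·v = λ·v`, `E·v = 0`, and
`v, F·v, …, F^{N−1}·v` a basis of `ℂ^N`. -/
theorem stmt4 (m : ℕ) (hm : 3 ≤ m) (q : ℂ) (hq : IsPrimitiveRoot q m)
    (N : ℕ) (hN1 : 1 ≤ N) (hNm : N < m)
    (K E F : Matrix (Fin N) (Fin N) ℂ) (h : IsIrrep q K E F) :
    ∃ v : Fin N → ℂ, v ≠ 0 ∧ ∃ lam : ℂ, lam ≠ 0 ∧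
      K.mulVec v = lam • v ∧ E.mulVec v = 0 ∧
      LinearIndependent ℂ (fun p : Fin N => (F ^ (p : ℕ)).mulVec v) ∧
      Submodule.span ℂ (Set.range fun p : Fin N => (F ^ (p : ℕ)).mulVec v) = ⊤ := by
  classical
  obtain ⟨⟨hK, hKE, hKF, hEF⟩, -, hirr⟩ := h
  haveI : Nonempty (Fin N) := ⟨⟨0, hN1⟩⟩
  have hqne : q ≠ 0 := hq.ne_zero (by omega)
  have hKd : IsUnit K.det := (Matrix.isUnit_iff_isUnit_det K).mp hK
  have hKiK : K⁻¹ * K = 1 := Matrix.nonsing_inv_mul K hKd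
  have hKinj : ∀ w : Fin N → ℂ, K.mulVec w = 0 → w = 0 := by
    intro w hw
    have h1 : (K⁻¹ * K).mulVec w = K⁻¹.mulVec (K.mulVec w) :=
      (Matrix.mulVec_mulVec w K⁻¹ K).symm
    rw [hKiK, Matrix.one_mulVec, hw, Matrix.mulVec_zero] at h1
    exact h1
  -- multiplied-out relations
  have hKE' : K * E = q • (E * K) := by
    have h1 := congrArg (· * K) hKE
    simp only [Matrix.smul_mul] at h1
    calc K * E = K * E * (K⁻¹ * K) := by rw [hKiK, mul_one]
    _ = K * E * K⁻¹ * K := by simp only [mul_assoc]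
    _ = q • (E * K) := h1
  have hKF' : K * F = q⁻¹ • (F * K) := by
    have h1 := congrArg (· * K) hKF
    simp only [Matrix.smul_mul] at h1
    calc K * F = K * F * (K⁻¹ * K) := by rw [hKiK, mul_one]
    _ = K * F * K⁻¹ * K := by simp only [mul_assoc]
    _ = q⁻¹ • (F * K) := h1
  -- action of K on images under E and F of K-eigenvectors
  have hraise : ∀ (w : Fin N → ℂ) (c : ℂ), K.mulVec w = c • w →
      K.mulVec (E.mulVec w) = (q * c) • E.mulVec w := by
    intro w c hc
    rw [Matrix.mulVec_mulVec, hKE', Matrix.smul_mulVec, ← Matrix.mulVec_mulVec, hc,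
      Matrix.mulVec_smul, smul_smul]
  have hlower : ∀ (w : Fin N → ℂ) (c : ℂ), K.mulVec w = c • w →
      K.mulVec (F.mulVec w) = (q⁻¹ * c) • F.mulVec w := by
    intro w c hc
    rw [Matrix.mulVec_mulVec, hKF', Matrix.smul_mulVec, ← Matrix.mulVec_mulVec, hc,
      Matrix.mulVec_smul, smul_smul]
  have hKinvVec : ∀ (w : Fin N → ℂ) (c : ℂ), c ≠ 0 → K.mulVec w = c • w →
      K⁻¹.mulVec w = c⁻¹ • w := by
    intro w c hc0 hc
    have h1 : K⁻¹.mulVec (K.mulVec w) = w := by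
      rw [Matrix.mulVec_mulVec, hKiK, Matrix.one_mulVec]
    rw [hc, Matrix.mulVec_smul] at h1
    calc K⁻¹.mulVec w = c⁻¹ • (c • K⁻¹.mulVec w) := by
          rw [smul_smul, inv_mul_cancel₀ hc0, one_smul]
    _ = c⁻¹ • w := by rw [h1]
  -- eigenvalue machinery
  set f : Module.End ℂ (Fin N → ℂ) := Matrix.mulVecLin K with hf
  obtain ⟨μ, hμ⟩ := Module.End.exists_eigenvalue f
  have hμ0 : μ ≠ 0 := by
    intro h0
    obtain ⟨w, hw⟩ := hμ.exists_hasEigenvector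
    have h1 : K.mulVec w = μ • w := hw.apply_eq_smul
    rw [h0, zero_smul] at h1
    exact hw.2 (hKinj w h1)
  have hchain : ∃ j : ℕ, ¬ f.HasEigenvalue (q ^ (j + 1) * μ) := by
    by_contra hall
    push_neg at hall
    have hall' : ∀ j : ℕ, f.HasEigenvalue (q ^ j * μ) := by
      intro j
      cases j with
      | zero => simpa using hμ
      | succ k => exact hall k
    choose w hw using fun j : Fin (N + 1) => (hall' j).exists_hasEigenvector
    have hinj : Function.Injective (fun j : Fin (N + 1) => q ^ (j : ℕ) * μ) := by
      intro i j hij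
      simp only at hij
      have h1 := mul_right_cancel₀ hμ0 hij
      exact Fin.ext (hq.pow_inj (lt_of_lt_of_le i.2 (by omega))
        (lt_of_lt_of_le j.2 (by omega)) h1)
    have hli := Module.End.eigenvectors_linearIndependent' f _ hinj w hw
    have hcard := hli.fintype_card_le_finrank
    simp only [Fintype.card_fin, Module.finrank_fin_fun] at hcard
    omega
  set j₀ := Nat.find hchain with hj₀
  have hnot : ¬ f.HasEigenvalue (q ^ (j₀ + 1) * μ) := Nat.find_spec hchain
  have hPj₀ : f.HasEigenvalue (q ^ j₀ * μ) := by
    rcases Nat.eq_zero_or_pos j₀ with h0 | hpos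
    · rw [h0]; simpa using hμ
    · have hk : j₀ - 1 < j₀ := by omega
      have h1 := Nat.find_min hchain hk
      have h2 : f.HasEigenvalue (q ^ (j₀ - 1 + 1) * μ) := not_not.mp h1
      have h3 : j₀ - 1 + 1 = j₀ := by omega
      rwa [h3] at h2
  set lam := q ^ j₀ * μ with hlam
  have hlam0 : lam ≠ 0 := mul_ne_zero (pow_ne_zero _ hqne) hμ0
  obtain ⟨v, hv⟩ := hPj₀.exists_hasEigenvector
  have hv0 : v ≠ 0 := hv.2
  have hKv : K.mulVec v = lam • v := hv.apply_eq_smul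
  have hEv : E.mulVec v = 0 := by
    by_contra hne
    apply hnot
    have h1 : f.HasEigenvector (q * lam) (E.mulVec v) := by
      refine Module.End.hasEigenvector_iff.mpr ⟨Module.End.mem_eigenspace_iff.mpr ?_, hne⟩
      exact hraise v lam hKv
    have h2 := Module.End.hasEigenvalue_of_hasEigenvector h1
    have h3 : q * lam = q ^ (j₀ + 1) * μ := by rw [hlam]; ring
    rwa [h3] at h2
  -- K-eigenvalue of F^j v
  have hFj : ∀ j : ℕ, K.mulVec ((F ^ j).mulVec v) = (q⁻¹ ^ j * lam) • (F ^ j).mulVec v := by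
    intro j
    induction j with
    | zero => simpa [Matrix.one_mulVec] using hKv
    | succ k ih =>
      have h1 : (F ^ (k + 1)).mulVec v = F.mulVec ((F ^ k).mulVec v) := by
        rw [Matrix.mulVec_mulVec, ← pow_succ']
      rw [h1, hlower _ _ ih]
      congr 1
      ring
  set W := Submodule.span ℂ (Set.range fun j : ℕ => (F ^ j).mulVec v) with hW
  have hgW : ∀ j : ℕ, (F ^ j).mulVec v ∈ W := fun j => Submodule.subset_span ⟨j, rfl⟩
  have hmap : ∀ (A : Matrix (Fin N) (Fin N) ℂ),
      (∀ j : ℕ, A.mulVec ((F ^ j).mulVec v) ∈ W) → ∀ w ∈ W, A.mulVec w ∈ W := by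
    intro A hA w hw
    have h1 : W.map A.mulVecLin ≤ W := by
      rw [hW, Submodule.map_span, Submodule.span_le]
      rintro x ⟨y, ⟨j, rfl⟩, rfl⟩
      simpa [Matrix.mulVecLin_apply] using hA j
    exact h1 ⟨w, hw, by simp [Matrix.mulVecLin_apply]⟩
  have hWFinv : ∀ w ∈ W, F.mulVec w ∈ W := by
    refine hmap F (fun j => ?_)
    have h1 : F.mulVec ((F ^ j).mulVec v) = (F ^ (j + 1)).mulVec v := by
      rw [Matrix.mulVec_mulVec, ← pow_succ']
    rw [h1]; exact hgW _
  have hWKinv : ∀ w ∈ W, K.mulVec w ∈ W := by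
    refine hmap K (fun j => ?_)
    rw [hFj j]
    exact W.smul_mem _ (hgW j)
  have hErel : E * F = F * E + (q - q⁻¹)⁻¹ • (K ^ 2 - K⁻¹ ^ 2) := by
    rw [← hEF]; abel
  have hEgj : ∀ j : ℕ, E.mulVec ((F ^ j).mulVec v) ∈ W := by
    intro j
    induction j with
    | zero =>
      rw [pow_zero, Matrix.one_mulVec, hEv]
      exact W.zero_mem
    | succ k ih =>
      have h1 : (F ^ (k + 1)).mulVec v = F.mulVec ((F ^ k).mulVec v) := by
        rw [Matrix.mulVec_mulVec, ← pow_succ']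
      rw [h1, Matrix.mulVec_mulVec, hErel, Matrix.add_mulVec, ← Matrix.mulVec_mulVec]
      refine W.add_mem (hWFinv _ ih) ?_
      rw [Matrix.smul_mulVec, Matrix.sub_mulVec]
      have hc0 : q⁻¹ ^ k * lam ≠ 0 := mul_ne_zero (pow_ne_zero _ (inv_ne_zero hqne)) hlam0
      have h2 : (K ^ 2).mulVec ((F ^ k).mulVec v)
          = ((q⁻¹ ^ k * lam) * (q⁻¹ ^ k * lam)) • (F ^ k).mulVec v := by
        rw [pow_two, ← Matrix.mulVec_mulVec, hFj k, Matrix.mulVec_smul, hFj k, smul_smul]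
      have hKi := hKinvVec _ _ hc0 (hFj k)
      have h3 : (K⁻¹ ^ 2).mulVec ((F ^ k).mulVec v)
          = ((q⁻¹ ^ k * lam)⁻¹ * (q⁻¹ ^ k * lam)⁻¹) • (F ^ k).mulVec v := by
        rw [pow_two, ← Matrix.mulVec_mulVec, hKi, Matrix.mulVec_smul, hKi, smul_smul]
      rw [h2, h3]
      exact W.smul_mem _ (W.sub_mem (W.smul_mem _ (hgW k)) (W.smul_mem _ (hgW k)))
  have hWEinv : ∀ w ∈ W, E.mulVec w ∈ W := hmap E hEgj
  have hWtop : W = ⊤ := by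
    rcases hirr W ⟨hWKinv, hWEinv, hWFinv⟩ with hbot | htop
    · exfalso
      have hvW : v ∈ W := by simpa [Matrix.one_mulVec] using hgW 0
      rw [hbot] at hvW
      exact hv0 ((Submodule.mem_bot ℂ).mp hvW)
    · exact htop
  -- no vanishing before step N
  have hnz : ∀ r : ℕ, r < N → (F ^ r).mulVec v ≠ 0 := by
    by_contra hcon
    push_neg at hcon
    obtain ⟨r, hrN, hr0⟩ := hcon
    have hvan : ∀ j : ℕ, r ≤ j → (F ^ j).mulVec v = 0 := by
      intro j hj
      have h1 : F ^ j = F ^ (j - r) * F ^ r := by rw [← pow_add]; congr 1; omega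
      rw [h1, ← Matrix.mulVec_mulVec, hr0, Matrix.mulVec_zero]
    set s : Set (Fin N → ℂ) := Set.range (fun j : Fin r => (F ^ (j : ℕ)).mulVec v) with hs
    have hle : W ≤ Submodule.span ℂ s := by
      rw [hW]
      refine Submodule.span_le.mpr ?_
      rintro x ⟨j, rfl⟩
      by_cases hjr : j < r
      · exact Submodule.subset_span ⟨⟨j, hjr⟩, rfl⟩
      · simp only
        rw [hvan j (by omega)]
        exact (Submodule.span ℂ s).zero_mem
    rw [hWtop] at hle
    have htop' : Submodule.span ℂ s = ⊤ := top_le_iff.mp hle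
    haveI : Fintype s := Set.fintypeRange _
    have h1 : Module.finrank ℂ (Submodule.span ℂ s : Submodule ℂ (Fin N → ℂ)) ≤ r := by
      refine (finrank_span_le_card s).trans ?_
      rw [Set.toFinset_card]
      exact (Fintype.card_range_le _).trans (by simp)
    rw [htop', finrank_top, Module.finrank_fin_fun] at h1
    omega
  -- conclude
  have hinj2 : Function.Injective (fun p : Fin N => q⁻¹ ^ (p : ℕ) * lam) := by
    intro i j hij
    simp only at hij
    have h1 := mul_right_cancel₀ hlam0 hij
    exact Fin.ext (hq.inv.pow_inj (lt_trans i.2 hNm) (lt_trans j.2 hNm) h1)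
  have heig : ∀ p : Fin N, f.HasEigenvector (q⁻¹ ^ (p : ℕ) * lam) ((F ^ (p : ℕ)).mulVec v) := by
    intro p
    exact Module.End.hasEigenvector_iff.mpr
      ⟨Module.End.mem_eigenspace_iff.mpr (hFj p), hnz p p.2⟩
  have hli := Module.End.eigenvectors_linearIndependent' f _ hinj2 _ heig
  exact ⟨v, hv0, lam, hlam0, hKv, hEv, hli,
    hli.span_eq_top_of_card_eq_finrank (by simp [Module.finrank_fin_fun])⟩
end
end

section
/- Let m ≥ 4 be even and let q ∈ ℂ be a primitive m-th root of unity. Then for every integer N with m/2 < N < m there is no irreducible representation of U_q(sl(2)) of dimension N. -/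
/-!
`E` multiplies `K`-eigenvalues by `q`, and a space of dimension `< m` cannot hold nonzero
eigenvectors for all of the `m` distinct eigenvalues `q ^ j * μ`; so there is a nonzero
eigenvector `v` of `K` with `E v = 0`, and some `F ^ n v` with `n < m` vanishes. The vectors
`F ^ p v` satisfy `E F ^ p v = c_p F ^ (p - 1) v`, so whenever `c_a = 0` they span, for `p ≥ a`, a
subrepresentation of dimension at most `n - a`. Irreducibility with `a = 0` gives `N ≤ n` for
every such `n`, hence `F ^ (m / 2) v ≠ 0`. Since
`q ^ 2` is a nontrivial `m / 2`-th root of unity, `c_(m/2)` is a vanishing combination of geometric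
sums, and irreducibility with `a = m / 2` gives `N ≤ n - m / 2 < m / 2`.
-/

open Matrix

noncomputable section

open Module End

theorem exists_ne_zero_and_succ_eq_zero {M : Type*} [Zero M] {x : ℕ → M} (h₀ : x 0 ≠ 0) {n : ℕ}
    (hn : x n = 0) : ∃ i, x i ≠ 0 ∧ x (i + 1) = 0 := by
  by_contra! h
  exact (Nat.rec h₀ h n : x n ≠ 0) hn

section
variable {k V : Type*} [Field k] [AddCommGroup V] [Module k V] {q : k} {K K' E F : End k V}

theorem apply_mem_eigenspace_of_mul_eq_smul_mul (h : K * E = q • (E * K)) {t : k} {x : V}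
    (hx : x ∈ K.eigenspace t) : E x ∈ K.eigenspace (q * t) := by
  rw [mem_eigenspace_iff] at hx ⊢
  rw [← Module.End.mul_apply, h, LinearMap.smul_apply, Module.End.mul_apply, hx, map_smul,
    smul_smul]

theorem pow_apply_mem_eigenspace_of_mul_eq_smul_mul (h : K * E = q • (E * K)) {t : k} {x : V}
    (hx : x ∈ K.eigenspace t) (j : ℕ) : (E ^ j) x ∈ K.eigenspace (q ^ j * t) := by
  induction j with
  | zero => simpa using hx
  | succ j ih =>
    rw [pow_succ' E, Module.End.mul_apply, pow_succ', mul_assoc]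
    exact apply_mem_eigenspace_of_mul_eq_smul_mul h ih

theorem sq_apply_of_mem_eigenspace {t : k} {x : V} (hx : x ∈ K.eigenspace t) :
    (K ^ 2) x = t ^ 2 • x := by
  rw [mem_eigenspace_iff] at hx
  rw [sq, Module.End.mul_apply, hx, map_smul, hx, smul_smul, sq]

theorem eq_zero_of_mem_eigenspace_zero (hK : K' * K = 1) {x : V} (hx : x ∈ K.eigenspace 0) :
    x = 0 := by
  rw [mem_eigenspace_iff, zero_smul] at hx
  rw [← Module.End.one_apply (R := k) x, ← hK, Module.End.mul_apply, hx, map_zero]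

theorem mem_eigenspace_inv_of_mul_eq_one (hK : K' * K = 1) {t : k} {x : V}
    (hx : x ∈ K.eigenspace t) : x ∈ K'.eigenspace t⁻¹ := by
  rcases eq_or_ne t 0 with rfl | ht
  · rw [eq_zero_of_mem_eigenspace_zero hK hx]
    exact zero_mem _
  · rw [mem_eigenspace_iff] at hx ⊢
    rw [← inv_smul_smul₀ ht (K' x), ← map_smul, ← hx, ← Module.End.mul_apply, hK,
      Module.End.one_apply]

theorem exists_lt_eq_zero_of_mem_eigenspace_pow_mul [FiniteDimensional k V] {m : ℕ}
    (hq : IsPrimitiveRoot q m) (hm : finrank k V < m) {t : k} (ht : t ≠ 0) {x : ℕ → V}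
    (hx : ∀ j, x j ∈ K.eigenspace (q ^ j * t)) : ∃ j < m, x j = 0 := by
  by_contra! hne
  have hinj : Function.Injective fun j : Fin m ↦ q ^ (j : ℕ) * t := fun i j hij ↦
    Fin.ext <| hq.pow_inj i.2 j.2 <| mul_right_cancel₀ ht hij
  have hli := K.eigenvectors_linearIndependent' _ hinj (fun j ↦ x j)
    fun j ↦ ⟨hx j, hne j j.2⟩
  have := hli.fintype_card_le_finrank
  rw [Fintype.card_fin] at this
  omega

theorem exists_eigenvector_apply_eq_zero [IsAlgClosed k] [FiniteDimensional k V] [Nontrivial V]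
    {m : ℕ} (hq : IsPrimitiveRoot q m) (hm : finrank k V < m) (hKE : K * E = q • (E * K))
    (hK : K' * K = 1) : ∃ t ≠ 0, ∃ v ∈ K.eigenspace t, v ≠ 0 ∧ E v = 0 := by
  obtain ⟨μ, hμ⟩ := K.exists_eigenvalue
  obtain ⟨v₀, hv₀, hv₀0⟩ := hμ.exists_hasEigenvector
  have hμ0 : μ ≠ 0 := by
    rintro rfl
    exact hv₀0 (eq_zero_of_mem_eigenspace_zero hK hv₀)
  have hchain := pow_apply_mem_eigenspace_of_mul_eq_smul_mul hKE hv₀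
  obtain ⟨n, -, hn⟩ := exists_lt_eq_zero_of_mem_eigenspace_pow_mul hq hm hμ0 hchain
  obtain ⟨i, hi, hi'⟩ := exists_ne_zero_and_succ_eq_zero (x := fun j ↦ (E ^ j) v₀)
    (by simpa using hv₀0) hn
  refine ⟨q ^ i * μ, mul_ne_zero (pow_ne_zero _ (hq.ne_zero (by omega))) hμ0, _, hchain i, hi,
    ?_⟩
  rwa [pow_succ', Module.End.mul_apply] at hi'

-- The `i`-th summand is the eigenvalue of `(K ^ 2 - K⁻¹ ^ 2) / (q - q⁻¹)` on `F ^ i v`.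
def chainCoeff (q t : k) (p : ℕ) : k :=
  ∑ i ∈ Finset.range p, (q - q⁻¹)⁻¹ * ((q⁻¹ ^ i * t) ^ 2 - (q⁻¹ ^ i * t)⁻¹ ^ 2)

theorem chainCoeff_zero (t : k) : chainCoeff q t 0 = 0 := Finset.sum_range_zero _

theorem chainCoeff_succ (t : k) (p : ℕ) : chainCoeff q t (p + 1) =
    chainCoeff q t p + (q - q⁻¹)⁻¹ * ((q⁻¹ ^ p * t) ^ 2 - (q⁻¹ ^ p * t)⁻¹ ^ 2) :=
  Finset.sum_range_succ _ _

theorem chainCoeff_eq_zero {e : ℕ} (hq : q ^ 2 ≠ 1) (he : q ^ (2 * e) = 1) (t : k) :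
    chainCoeff q t e = 0 := by
  have hq' : q⁻¹ ^ 2 ≠ 1 := by rwa [inv_pow, inv_ne_one]
  have hgeom : ∑ i ∈ Finset.range e, (q ^ 2) ^ i = 0 := by
    rw [geom_sum_eq hq, ← pow_mul, he, sub_self, zero_div]
  have hgeom' : ∑ i ∈ Finset.range e, (q⁻¹ ^ 2) ^ i = 0 := by
    rw [geom_sum_eq hq', ← pow_mul, inv_pow, he, inv_one, sub_self, zero_div]
  have hsplit : ∀ i, (q - q⁻¹)⁻¹ * ((q⁻¹ ^ i * t) ^ 2 - (q⁻¹ ^ i * t)⁻¹ ^ 2) =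
      (q - q⁻¹)⁻¹ * t ^ 2 * (q⁻¹ ^ 2) ^ i - (q - q⁻¹)⁻¹ * t⁻¹ ^ 2 * (q ^ 2) ^ i := by
    intro i
    rw [mul_inv, inv_pow, inv_inv]
    ring
  simp only [chainCoeff, hsplit, Finset.sum_sub_distrib, ← Finset.mul_sum, hgeom, hgeom',
    mul_zero, sub_zero]

-- At `p = 0` the truncated `p - 1` is harmless: `chainCoeff q t 0 = 0`.
theorem apply_pow_apply_eq_chainCoeff_smul (hKF : K * F = q⁻¹ • (F * K))
    (hEF : E * F - F * E = (q - q⁻¹)⁻¹ • (K ^ 2 - K' ^ 2)) (hK : K' * K = 1) {t : k} {v : V}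
    (hv : v ∈ K.eigenspace t) (hEv : E v = 0) (p : ℕ) :
    E ((F ^ p) v) = chainCoeff q t p • (F ^ (p - 1)) v := by
  induction p with
  | zero => rw [pow_zero, Module.End.one_apply, hEv, chainCoeff_zero, zero_smul]
  | succ p ih =>
    have hw := pow_apply_mem_eigenspace_of_mul_eq_smul_mul hKF hv p
    have hF : chainCoeff q t p • F ((F ^ (p - 1)) v) = chainCoeff q t p • (F ^ p) v := by
      rcases p with _ | p
      · rw [chainCoeff_zero, zero_smul, zero_smul]
      · rw [Nat.add_sub_cancel, ← Module.End.mul_apply, ← pow_succ']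
    rw [pow_succ' F, Module.End.mul_apply, ← Module.End.mul_apply, sub_eq_iff_eq_add.mp hEF,
      LinearMap.add_apply, Module.End.mul_apply, ih, map_smul, hF, LinearMap.smul_apply,
      LinearMap.sub_apply, sq_apply_of_mem_eigenspace hw,
      sq_apply_of_mem_eigenspace (mem_eigenspace_inv_of_mul_eq_one hK hw), ← sub_smul,
      smul_smul, ← add_smul, chainCoeff_succ, Nat.add_sub_cancel, add_comm]

theorem span_mem_invtSubmodule {s : Set V} (h : ∀ x ∈ s, K x ∈ Submodule.span k s) :
    Submodule.span k s ∈ K.invtSubmodule := by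
  rwa [mem_invtSubmodule, Submodule.span_le]

def loweringSpan (F : End k V) (v : V) (a : ℕ) : Submodule k V :=
  Submodule.span k ((fun p ↦ (F ^ p) v) '' Set.Ici a)

theorem pow_apply_mem_loweringSpan (v : V) {a p : ℕ} (hp : a ≤ p) :
    (F ^ p) v ∈ loweringSpan F v a :=
  Submodule.subset_span ⟨p, hp, rfl⟩

theorem loweringSpan_mem_invtSubmodule_self (v : V) (a : ℕ) :
    loweringSpan F v a ∈ F.invtSubmodule := by
  refine span_mem_invtSubmodule ?_
  rintro _ ⟨p, hp, rfl⟩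
  rw [← Module.End.mul_apply, ← pow_succ']
  exact pow_apply_mem_loweringSpan v (Nat.le_succ_of_le hp)

theorem loweringSpan_mem_invtSubmodule_of_mem_eigenspace (hKF : K * F = q⁻¹ • (F * K)) {t : k}
    {v : V} (hv : v ∈ K.eigenspace t) (a : ℕ) : loweringSpan F v a ∈ K.invtSubmodule := by
  refine span_mem_invtSubmodule ?_
  rintro _ ⟨p, hp, rfl⟩
  rw [mem_eigenspace_iff.mp (pow_apply_mem_eigenspace_of_mul_eq_smul_mul hKF hv p)]
  exact Submodule.smul_mem _ _ (pow_apply_mem_loweringSpan v hp)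

theorem loweringSpan_mem_invtSubmodule_of_chainCoeff_eq_zero (hKF : K * F = q⁻¹ • (F * K))
    (hEF : E * F - F * E = (q - q⁻¹)⁻¹ • (K ^ 2 - K' ^ 2)) (hK : K' * K = 1) {t : k} {v : V}
    (hv : v ∈ K.eigenspace t) (hEv : E v = 0) {a : ℕ} (ha : chainCoeff q t a = 0) :
    loweringSpan F v a ∈ E.invtSubmodule := by
  refine span_mem_invtSubmodule ?_
  rintro _ ⟨p, hp, rfl⟩
  rw [apply_pow_apply_eq_chainCoeff_smul hKF hEF hK hv hEv]
  rcases (Set.mem_Ici.mp hp).eq_or_lt with rfl | hlt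
  · rw [ha, zero_smul]
    exact zero_mem _
  · exact Submodule.smul_mem _ _ (pow_apply_mem_loweringSpan v (Nat.le_sub_one_of_lt hlt))

theorem finrank_loweringSpan_le {v : V} {n : ℕ} (hn : (F ^ n) v = 0) (a : ℕ) :
    finrank k (loweringSpan F v a) ≤ n - a := by
  classical
  let s := (Finset.Ico a n).image fun p ↦ (F ^ p) v
  have hle : loweringSpan F v a ≤ Submodule.span k s := by
    refine Submodule.span_le.mpr ?_
    rintro _ ⟨p, hp, rfl⟩
    rcases lt_or_ge p n with hpn | hpn
    · exact Submodule.subset_span (by simpa [s] using ⟨p, ⟨hp, hpn⟩, rfl⟩)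
    · show (F ^ p) v ∈ _
      rw [← Nat.sub_add_cancel hpn, pow_add, Module.End.mul_apply, hn, map_zero]
      exact zero_mem _
  calc finrank k (loweringSpan F v a) ≤ finrank k (Submodule.span k (s : Set V)) :=
        Submodule.finrank_mono hle
    _ ≤ s.card := finrank_span_finset_le_card s
    _ ≤ n - a := Finset.card_image_le.trans (Nat.card_Ico a n).le

end

theorem IsRep.toLinAlgEquiv' {q : ℂ} {N : ℕ} {K E F : Matrix (Fin N) (Fin N) ℂ}
    (h : IsRep q K E F) :
    toLinAlgEquiv' K * toLinAlgEquiv' E = q • (toLinAlgEquiv' E * toLinAlgEquiv' K) ∧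
    toLinAlgEquiv' K * toLinAlgEquiv' F = q⁻¹ • (toLinAlgEquiv' F * toLinAlgEquiv' K) ∧
    toLinAlgEquiv' E * toLinAlgEquiv' F - toLinAlgEquiv' F * toLinAlgEquiv' E =
      (q - q⁻¹)⁻¹ • (toLinAlgEquiv' K ^ 2 - toLinAlgEquiv' K⁻¹ ^ 2) ∧
    toLinAlgEquiv' K⁻¹ * toLinAlgEquiv' K = 1 := by
  obtain ⟨hKu, hKE, hKF, hEF⟩ := h
  have hK : K⁻¹ * K = 1 := nonsing_inv_mul K ((isUnit_iff_isUnit_det K).mp hKu)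
  have hconj {X : Matrix (Fin N) (Fin N) ℂ} {c : ℂ} (hX : K * X * K⁻¹ = c • X) :
      K * X = c • (X * K) := by
    rw [← smul_mul, ← hX, Matrix.mul_assoc, hK, Matrix.mul_one]
  simp only [← map_mul, ← map_smul, ← map_pow, ← map_sub, hconj hKE, hconj hKF, hEF, hK, map_one,
    and_self]

/-- For even `m ≥ 4` and `q` a primitive `m`-th root of unity, there is no irreducible
representation of `U_q(sl(2))` of dimension `N` for `m/2 < N < m`. -/
theorem stmt9 (m : ℕ) (hm : 4 ≤ m) (heven : Even m) (q : ℂ) (hq : IsPrimitiveRoot q m)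
    (N : ℕ) (hN1 : m / 2 < N) (hN2 : N < m)
    (K E F : Matrix (Fin N) (Fin N) ℂ) :
    ¬ IsIrrep q K E F := by
  rintro ⟨hrep, hN, hirr⟩
  obtain ⟨hKE, hKF, hEF, hK⟩ := hrep.toLinAlgEquiv'
  have hfin : finrank ℂ (Fin N → ℂ) = N := finrank_fin_fun ℂ
  have hdim : finrank ℂ (Fin N → ℂ) < m := by rwa [hfin]
  have : Nonempty (Fin N) := ⟨⟨0, hN⟩⟩
  obtain ⟨t, ht, v, hv, hv0, hEv⟩ := exists_eigenvector_apply_eq_zero hq hdim hKE hK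
  obtain ⟨n, hnm, hn⟩ := exists_lt_eq_zero_of_mem_eigenspace_pow_mul hq.inv hdim ht
    (pow_apply_mem_eigenspace_of_mul_eq_smul_mul hKF hv)
  have hbound (a : ℕ) (ha : chainCoeff q t a = 0) (hva : (toLinAlgEquiv' F ^ a) v ≠ 0) {p : ℕ}
      (hp : (toLinAlgEquiv' F ^ p) v = 0) : N ≤ p - a := by
    have htop := (hirr _ ⟨loweringSpan_mem_invtSubmodule_of_mem_eigenspace hKF hv a,
      loweringSpan_mem_invtSubmodule_of_chainCoeff_eq_zero hKF hEF hK hv hEv ha,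
      loweringSpan_mem_invtSubmodule_self v a⟩).resolve_left fun hbot ↦
        hva ((Submodule.mem_bot ℂ).mp (hbot ▸ pow_apply_mem_loweringSpan v le_rfl))
    have := finrank_loweringSpan_le hp a
    rwa [htop, finrank_top, hfin] at this
  have hvm : (toLinAlgEquiv' F ^ (m / 2)) v ≠ 0 := fun h ↦ by
    have := hbound 0 (chainCoeff_zero t) (by simpa using hv0) h
    omega
  have hcm : chainCoeff q t (m / 2) = 0 :=
    chainCoeff_eq_zero (hq.pow_ne_one_of_pos_of_lt two_ne_zero (by omega))
      (by rw [Nat.mul_div_cancel' heven.two_dvd, hq.pow_eq_one]) t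
  have := hbound (m / 2) hcm hvm hn
  omega
end
end

section
/- Let m ≥ 3 and let q ∈ ℂ be a primitive m-th root of unity. Let (K, E, F) be an irreducible representation of U_q(sl(2)) of dimension N ≥ 1 such that both E and F are injective (as linear maps on ℂ^N). Then N = m. -/
open Matrix

noncomputable section

/-! The relations give `E^(n+1) F - F E^(n+1) = (q - q⁻¹)⁻¹ ((∑_{i≤n} q^{2i}) E^n K² -
(∑_{i≤n} q^{-2i}) E^n K⁻²)`. For `n + 1 = m` both geometric sums vanish, since `q^{±2} ≠ 1` are
`m`-th roots of unity, so `E^m` is central and, by Schur's lemma, `E^m = c • 1` with `c ≠ 0`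
because `E` is injective. Let `v` be a common eigenvector of the commuting operators `K` and
`FE`. The vectors `E^p v`, `p < m`, are `K`-eigenvectors with the pairwise distinct eigenvalues
`q^p a`, so they are independent and `m ≤ N`. Their span is stable under `K`, under `E` (as
`E^m v = c v`) and under `F` (as `F E^(p+1) v` is a multiple of `E^p v`), so by irreducibility it
is everything and `N ≤ m`. -/

open Finset Module.End

section TwistedCommutation

variable {R A : Type*} [CommRing R] [Ring A] [Algebra R A]

theorem pow_mul_eq_smul_mul_pow_s10 {X E : A} {a : R} (h : X * E = a • (E * X)) (k : ℕ) :
    X ^ k * E = a ^ k • (E * X ^ k) := by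
  induction k with
  | zero => simp
  | succ k ih =>
    rw [pow_succ, mul_assoc, h, mul_smul_comm, ← mul_assoc, ih, smul_mul_assoc, smul_smul,
      mul_assoc, ← pow_succ, ← pow_succ']

theorem mul_pow_eq_smul_pow_mul {X E : A} {a : R} (h : X * E = a • (E * X)) (k : ℕ) :
    X * E ^ k = a ^ k • (E ^ k * X) := by
  induction k with
  | zero => simp
  | succ k ih =>
    rw [pow_succ, ← mul_assoc, ih, smul_mul_assoc, mul_assoc, h, mul_smul_comm, smul_smul,
      ← mul_assoc, ← pow_succ, pow_succ]

theorem pow_succ_mul_sub_mul_pow_succ {E F X Y : A} {r a b : R}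
    (hEF : E * F - F * E = r • (X - Y)) (hX : X * E = a • (E * X)) (hY : Y * E = b • (E * Y))
    (n : ℕ) :
    E ^ (n + 1) * F - F * E ^ (n + 1) =
      r • ((∑ i ∈ range (n + 1), a ^ i) • (E ^ n * X) -
        (∑ i ∈ range (n + 1), b ^ i) • (E ^ n * Y)) := by
  induction n with
  | zero => simpa using hEF
  | succ n ih =>
    have hsplit : E ^ (n + 2) * F - F * E ^ (n + 2) =
        E * (E ^ (n + 1) * F - F * E ^ (n + 1)) + (E * F - F * E) * E ^ (n + 1) := by
      simp only [pow_succ' E (n + 1)]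
      noncomm_ring
    rw [hsplit, ih, hEF, smul_mul_assoc, sub_mul, mul_pow_eq_smul_pow_mul hX,
      mul_pow_eq_smul_pow_mul hY, sum_range_succ _ (n + 1), sum_range_succ _ (n + 1)]
    simp only [mul_smul_comm, mul_sub, ← mul_assoc, ← pow_succ']
    module

theorem commute_pow_of_geom_sum_eq_zero {E F X Y : A} {r a b : R}
    (hEF : E * F - F * E = r • (X - Y)) (hX : X * E = a • (E * X)) (hY : Y * E = b • (E * Y))
    {n : ℕ} (hn : n ≠ 0) (ha : ∑ i ∈ range n, a ^ i = 0) (hb : ∑ i ∈ range n, b ^ i = 0) :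
    Commute (E ^ n) F := by
  obtain ⟨k, rfl⟩ := Nat.exists_eq_succ_of_ne_zero hn
  have := pow_succ_mul_sub_mul_pow_succ hEF hX hY k
  rw [ha, hb, zero_smul, zero_smul, sub_zero, smul_zero] at this
  exact sub_eq_zero.mp this

end TwistedCommutation

theorem geom_sum_eq_zero_of_pow_eq_one {𝕜 : Type*} [Field 𝕜] {x : 𝕜} (hx : x ≠ 1) {n : ℕ}
    (hxn : x ^ n = 1) : ∑ i ∈ range n, x ^ i = 0 := by
  rw [geom_sum_eq hx, hxn, sub_self, zero_div]

theorem Module.End.exists_hasEigenvector_of_commute {𝕜 V : Type*} [Field 𝕜] [IsAlgClosed 𝕜]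
    [AddCommGroup V] [Module 𝕜 V] [FiniteDimensional 𝕜 V] [Nontrivial V] {f g : End 𝕜 V}
    (h : Commute f g) : ∃ v a b, f.HasEigenvector a v ∧ g.HasEigenvector b v := by
  obtain ⟨a, ha⟩ := f.exists_eigenvalue
  have hmaps : ∀ x ∈ f.eigenspace a, g x ∈ f.eigenspace a :=
    fun x hx ↦ mapsTo_genEigenspace_of_comm h a 1 hx
  have : Nontrivial (f.eigenspace a) := Submodule.nontrivial_iff_ne_bot.mpr ha
  obtain ⟨b, hb⟩ := exists_eigenvalue (g.restrict hmaps)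
  obtain ⟨w, hw, hw0⟩ := hb.exists_hasEigenvector
  replace hw0 : (w : V) ≠ 0 := by simpa using hw0
  refine ⟨w, a, b, ⟨w.2, hw0⟩, mem_eigenspace_iff.mpr ?_, hw0⟩
  simpa using congrArg Subtype.val (mem_eigenspace_iff.mp hw)

theorem Matrix.inv_mulVec_eq_inv_smul {n : Type*} [Fintype n] [DecidableEq n]
    {𝕜 : Type*} [Field 𝕜] {A : Matrix n n 𝕜} (hA : IsUnit A) {v : n → 𝕜} {a : 𝕜}
    (hv : A *ᵥ v = a • v) : A⁻¹ *ᵥ v = a⁻¹ • v := by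
  have hv' : v = a • (A⁻¹ *ᵥ v) := by
    rw [← mulVec_smul, ← hv, mulVec_mulVec,
      nonsing_inv_mul _ ((isUnit_iff_isUnit_det A).mp hA), one_mulVec]
  rcases eq_or_ne a 0 with rfl | ha
  · rw [zero_smul] at hv'
    simp [hv']
  · conv_rhs => rw [hv']
    rw [inv_smul_smul₀ ha]

theorem Matrix.mul_eq_smul_mul_of_mul_mul_inv_eq {n : Type*} [Fintype n] [DecidableEq n]
    {𝕜 : Type*} [Field 𝕜] {A B : Matrix n n 𝕜} (hA : IsUnit A) {c : 𝕜}
    (h : A * B * A⁻¹ = c • B) : A * B = c • (B * A) := by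
  rw [← smul_mul_assoc, ← h, mul_assoc _ A⁻¹,
    nonsing_inv_mul _ ((isUnit_iff_isUnit_det A).mp hA), mul_one]

theorem Matrix.injective_pow_mulVec {n R : Type*} [Fintype n] [DecidableEq n] [CommSemiring R]
    {A : Matrix n n R} (hA : Function.Injective A.mulVec) (p : ℕ) :
    Function.Injective (A ^ p).mulVec := by
  induction p with
  | zero => exact fun x y hxy ↦ by simpa using hxy
  | succ p ih =>
    rw [pow_succ']
    exact fun x y hxy ↦ ih (hA (by simpa only [← mulVec_mulVec] using hxy))

theorem Matrix.mulVec_mem_span_range {n ι R : Type*} [Fintype n] [CommSemiring R]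
    {M : Matrix n n R} {s : ι → n → R} (hs : ∀ i, M *ᵥ s i ∈ Submodule.span R (Set.range s))
    {u : n → R} (hu : u ∈ Submodule.span R (Set.range s)) :
    M *ᵥ u ∈ Submodule.span R (Set.range s) :=
  (Submodule.span_le (p := (Submodule.span R (Set.range s)).comap M.mulVecLin)).mpr
    (Set.range_subset_iff.mpr hs) hu

section

variable {q : ℂ} {N : ℕ} {K E F : Matrix (Fin N) (Fin N) ℂ}

theorem IsIrrep.exists_eq_smul_one_of_commute (h : IsIrrep q K E F)
    {M : Matrix (Fin N) (Fin N) ℂ} (hK : Commute M K) (hE : Commute M E) (hF : Commute M F) :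
    ∃ c : ℂ, M = c • 1 := by
  have : NeZero N := ⟨by have := h.2.1; omega⟩
  obtain ⟨c, hc⟩ := exists_eigenvalue (toLin' M)
  have hinv {A : Matrix (Fin N) (Fin N) ℂ} (hA : Commute M A) :
      ∀ v ∈ eigenspace (toLin' M) c, A *ᵥ v ∈ eigenspace (toLin' M) c := fun v hv ↦ by
    simpa using mapsTo_genEigenspace_of_comm (hA.map toLinAlgEquiv') c 1 hv
  have htop := (h.2.2 _ ⟨hinv hK, hinv hE, hinv hF⟩).resolve_left hc
  refine ⟨c, toLin'.injective (LinearMap.ext fun v ↦ ?_)⟩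
  simpa using mem_eigenspace_iff.mp (htop ▸ Submodule.mem_top : v ∈ eigenspace (toLin' M) c)

namespace IsRep

theorem K_mul_E (h : IsRep q K E F) : K * E = q • (E * K) :=
  mul_eq_smul_mul_of_mul_mul_inv_eq h.1 h.2.1

theorem K_mul_F (h : IsRep q K E F) : K * F = q⁻¹ • (F * K) :=
  mul_eq_smul_mul_of_mul_mul_inv_eq h.1 h.2.2.1

theorem Kinv_mul_E (h : IsRep q K E F) (hq : q ≠ 0) : K⁻¹ * E = q⁻¹ • (E * K⁻¹) := by
  have hK := (isUnit_iff_isUnit_det K).mp h.1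
  rw [eq_inv_smul_iff₀ hq]
  calc q • (K⁻¹ * E) = K⁻¹ * (K * E) * K⁻¹ := by
        rw [h.K_mul_E, mul_smul_comm, smul_mul_assoc, mul_assoc, mul_assoc,
          mul_nonsing_inv _ hK, mul_one]
    _ = E * K⁻¹ := by rw [← mul_assoc, nonsing_inv_mul _ hK, one_mul]

theorem commute_K_FE (h : IsRep q K E F) (hq : q ≠ 0) : Commute K (F * E) := by
  rw [Commute, SemiconjBy, ← mul_assoc, h.K_mul_F, smul_mul_assoc, mul_assoc, h.K_mul_E,
    mul_smul_comm, smul_smul, inv_mul_cancel₀ hq, one_smul, mul_assoc]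

theorem commute_K_E_pow (h : IsRep q K E F) {m : ℕ} (hq : q ^ m = 1) : Commute K (E ^ m) := by
  rw [Commute, SemiconjBy, mul_pow_eq_smul_pow_mul h.K_mul_E, hq, one_smul]

theorem commute_E_pow_F (h : IsRep q K E F) {m : ℕ} (hq : IsPrimitiveRoot q m) (hm : 2 < m) :
    Commute (E ^ m) F := by
  have hq0 : q ≠ 0 := hq.ne_zero (by omega)
  have hsq (x : ℂ) (hx : x ^ m = 1) : (x ^ 2) ^ m = 1 := by
    rw [← pow_mul, mul_comm, pow_mul, hx, one_pow]
  have hq2 : q ^ 2 ≠ 1 := hq.pow_ne_one_of_pos_of_lt two_ne_zero hm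
  have hqinv2 : q⁻¹ ^ 2 ≠ 1 := by rwa [inv_pow, inv_ne_one]
  exact commute_pow_of_geom_sum_eq_zero h.2.2.2 (pow_mul_eq_smul_mul_pow_s10 h.K_mul_E 2)
    (pow_mul_eq_smul_mul_pow_s10 (h.Kinv_mul_E hq0) 2) (by omega)
    (geom_sum_eq_zero_of_pow_eq_one hq2 (hsq q hq.pow_eq_one))
    (geom_sum_eq_zero_of_pow_eq_one hqinv2 (hsq q⁻¹ (by rw [inv_pow, hq.pow_eq_one, inv_one])))

variable {v : Fin N → ℂ} {a : ℂ}

theorem K_mulVec_E_pow_mulVec (h : IsRep q K E F) (hv : K *ᵥ v = a • v) (p : ℕ) :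
    K *ᵥ (E ^ p *ᵥ v) = (q ^ p * a) • (E ^ p *ᵥ v) := by
  rw [mulVec_mulVec, mul_pow_eq_smul_pow_mul h.K_mul_E, smul_mulVec, ← mulVec_mulVec, hv,
    mulVec_smul, smul_smul]

theorem commutator_mulVec_mem_span (h : IsRep q K E F) (hv : K *ᵥ v = a • v) :
    (E * F - F * E) *ᵥ v ∈ ℂ ∙ v := by
  have hvinv := inv_mulVec_eq_inv_smul h.1 hv
  have hsq {B : Matrix (Fin N) (Fin N) ℂ} {b : ℂ} (hB : B *ᵥ v = b • v) :
      B ^ 2 *ᵥ v = b ^ 2 • v := by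
    rw [sq, ← mulVec_mulVec, hB, mulVec_smul, hB, smul_smul, sq]
  rw [h.2.2.2, smul_mulVec, sub_mulVec, hsq hv, hsq hvinv, ← sub_smul, smul_smul]
  exact Submodule.smul_mem _ _ (Submodule.mem_span_singleton_self v)

theorem FE_mulVec_E_pow_mulVec_mem_span (h : IsRep q K E F) (hK : K *ᵥ v = a • v) {b : ℂ}
    (hFE : (F * E) *ᵥ v = b • v) (p : ℕ) : (F * E) *ᵥ (E ^ p *ᵥ v) ∈ ℂ ∙ (E ^ p *ᵥ v) := by
  induction p with
  | zero => simp [hFE, Submodule.mem_span_singleton]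
  | succ p ih =>
    obtain ⟨c, hc⟩ := Submodule.mem_span_singleton.mp ih
    have hsplit : F * E * E = E * (F * E) - (E * F - F * E) * E := by noncomm_ring
    rw [pow_succ', ← mulVec_mulVec, mulVec_mulVec _ (F * E), hsplit, sub_mulVec,
      ← mulVec_mulVec, ← hc, mulVec_smul, ← mulVec_mulVec]
    refine sub_mem (Submodule.smul_mem _ _ (Submodule.mem_span_singleton_self _)) ?_
    simpa only [mulVec_mulVec, ← pow_succ'] using
      h.commutator_mulVec_mem_span (h.K_mulVec_E_pow_mulVec hK (p + 1))

theorem linearIndependent_E_pow_mulVec (h : IsRep q K E F) {m : ℕ} (hq : IsPrimitiveRoot q m)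
    (hE : Function.Injective E.mulVec) (hv : v ≠ 0) (hK : K *ᵥ v = a • v) :
    LinearIndependent ℂ (fun p : Fin m ↦ E ^ (p : ℕ) *ᵥ v) := by
  have ha : a ≠ 0 := by
    rintro rfl
    refine hv ?_
    rw [← one_mulVec v, ← nonsing_inv_mul K ((isUnit_iff_isUnit_det K).mp h.1), ← mulVec_mulVec,
      hK, zero_smul, mulVec_zero]
  refine eigenvectors_linearIndependent' (toLin' K) (fun p : Fin m ↦ q ^ (p : ℕ) * a) ?_ _ fun p ↦
    ⟨mem_eigenspace_iff.mpr (by simpa using h.K_mulVec_E_pow_mulVec hK p), ?_⟩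
  · exact fun i j hij ↦ Fin.ext (hq.pow_inj i.2 j.2 (mul_right_cancel₀ ha hij))
  · simpa using (injective_pow_mulVec hE p).ne hv

end IsRep

theorem IsIrrep.span_E_pow_mulVec_eq_top (h : IsIrrep q K E F) {m : ℕ} (hm : m ≠ 0) {c : ℂ}
    (hc : E ^ m = c • 1) (hc0 : c ≠ 0) {v : Fin N → ℂ} (hv : v ≠ 0) {a b : ℂ}
    (hK : K *ᵥ v = a • v) (hFE : (F * E) *ᵥ v = b • v) :
    Submodule.span ℂ (Set.range fun p : Fin m ↦ E ^ (p : ℕ) *ᵥ v) = ⊤ := by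
  set W := Submodule.span ℂ (Set.range fun p : Fin m ↦ E ^ (p : ℕ) *ᵥ v)
  have hmem {p : ℕ} (hp : p < m) : E ^ p *ᵥ v ∈ W := Submodule.subset_span ⟨⟨p, hp⟩, rfl⟩
  have hv0 : v ∈ W := by simpa using hmem (Nat.pos_of_ne_zero hm)
  have hF {p : ℕ} (hp : p < m) : F *ᵥ (E ^ (p + 1) *ᵥ v) ∈ W := by
    rw [pow_succ', ← mulVec_mulVec, mulVec_mulVec _ F]
    exact (Submodule.span_singleton_le_iff_mem _ _).mpr (hmem hp)
      (h.1.FE_mulVec_E_pow_mulVec_mem_span hK hFE p)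
  have hinv : InvariantSub K E F W := by
    refine ⟨fun u ↦ mulVec_mem_span_range fun p ↦ ?_, fun u ↦ mulVec_mem_span_range fun p ↦ ?_,
      fun u ↦ mulVec_mem_span_range fun p ↦ ?_⟩
    · rw [h.1.K_mulVec_E_pow_mulVec hK]
      exact W.smul_mem _ (hmem p.2)
    · rw [mulVec_mulVec, ← pow_succ']
      rcases (show (p : ℕ) + 1 ≤ m from p.2).lt_or_eq with hp | hp
      · exact hmem hp
      · rw [hp, hc, smul_mulVec, one_mulVec]
        exact W.smul_mem _ hv0
    · obtain ⟨_ | p, hp⟩ := p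
      · have hFv : F *ᵥ v = c⁻¹ • F *ᵥ (E ^ (m - 1 + 1) *ᵥ v) := by
          rw [Nat.sub_add_cancel (Nat.pos_of_ne_zero hm), hc, smul_mulVec, one_mulVec,
            mulVec_smul, inv_smul_smul₀ hc0]
        rw [pow_zero, one_mulVec, hFv]
        exact W.smul_mem _ (hF (by omega))
      · exact hF (by omega)
  exact (h.2.2 W hinv).resolve_left fun hW ↦ hv (by rwa [hW, Submodule.mem_bot] at hv0)

end

theorem stmt10_general (m : ℕ) (hm : 3 ≤ m) (q : ℂ) (hq : IsPrimitiveRoot q m)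
    (N : ℕ) (K E F : Matrix (Fin N) (Fin N) ℂ)
    (h : IsIrrep q K E F)
    (hE : Function.Injective E.mulVec) :
    N = m := by
  obtain ⟨c, hc⟩ := h.exists_eq_smul_one_of_commute (h.1.commute_K_E_pow hq.pow_eq_one).symm
    ((Commute.refl E).pow_left m) (h.1.commute_E_pow_F hq (by omega))
  have : NeZero N := ⟨by have := h.2.1; omega⟩
  obtain ⟨v, a, b, hK, hFE⟩ :=
    exists_hasEigenvector_of_commute ((h.1.commute_K_FE (hq.ne_zero (by omega))).map toLinAlgEquiv')
  have hKv : K *ᵥ v = a • v := by simpa using hK.apply_eq_smul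
  have hFEv : (F * E) *ᵥ v = b • v := by simpa using hFE.apply_eq_smul
  have hc0 : c ≠ 0 := by
    rintro rfl
    exact hK.2 (injective_pow_mulVec hE m (by rw [hc, zero_smul, zero_mulVec, mulVec_zero]))
  have hspan := h.span_E_pow_mulVec_eq_top (by omega) hc hc0 hK.2 hKv hFEv
  apply le_antisymm
  · have := finrank_range_le_card (R := ℂ) fun p : Fin m ↦ E ^ (p : ℕ) *ᵥ v
    rwa [Set.finrank, hspan, finrank_top, Module.finrank_fin_fun, Fintype.card_fin] at this
  · simpa using (h.1.linearIndependent_E_pow_mulVec hq hE hK.2 hKv).fintype_card_le_finrank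

/-- If `(K, E, F)` is an irreducible representation of `U_q(sl(2))` (with `q` a primitive
`m`-th root of unity, `m ≥ 3`) such that both `E` and `F` are injective, then `N = m`. -/
theorem stmt10 (m : ℕ) (hm : 3 ≤ m) (q : ℂ) (hq : IsPrimitiveRoot q m)
    (N : ℕ) (hN : 1 ≤ N) (K E F : Matrix (Fin N) (Fin N) ℂ)
    (h : IsIrrep q K E F)
    (hE : Function.Injective E.mulVec) (hF : Function.Injective F.mulVec) :
    N = m :=
  stmt10_general m hm q hq N K E F h hE
end
end

section
/- Let m ≥ 3 and let q ∈ ℂ be a primitive m-th root of unity. Let (K, E, F) be an irreducible representation of U_q(sl(2)) of dimension N ≥ m such that E is not injective or F is not injective (as linear maps on ℂ^N). Then N = m. -/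
open Matrix

noncomputable section

namespace Stmt11Aux

variable {N : ℕ}

/-- A subspace closed under an invertible matrix is closed under its inverse. -/
lemma closed_inv {K : Matrix (Fin N) (Fin N) ℂ} (hK : IsUnit K)
    {W : Submodule ℂ (Fin N → ℂ)} (hW : ∀ v ∈ W, K.mulVec v ∈ W) :
    ∀ v ∈ W, K⁻¹.mulVec v ∈ W := by
  have hdet : IsUnit K.det := (Matrix.isUnit_iff_isUnit_det K).mp hK
  have hKK : K⁻¹ * K = 1 := Matrix.nonsing_inv_mul K hdet
  have hmaps : ∀ x ∈ W, K.mulVecLin x ∈ W := by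
    intro x hx; simpa [Matrix.mulVecLin_apply] using hW x hx
  set f : W →ₗ[ℂ] W := (K.mulVecLin).restrict hmaps with hf
  have hinj : Function.Injective f := by
    intro a b hab
    have h1 : K.mulVec (a : Fin N → ℂ) = K.mulVec (b : Fin N → ℂ) := congrArg Subtype.val hab
    have h2 : K⁻¹.mulVec (K.mulVec (a : Fin N → ℂ)) = K⁻¹.mulVec (K.mulVec (b : Fin N → ℂ)) :=
      congrArg _ h1
    rw [Matrix.mulVec_mulVec, Matrix.mulVec_mulVec, hKK, Matrix.one_mulVec,
      Matrix.one_mulVec] at h2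
    exact Subtype.ext h2
  have hsurj : Function.Surjective f := (LinearMap.injective_iff_surjective).mp hinj
  intro v hv
  obtain ⟨u, hu⟩ := hsurj ⟨v, hv⟩
  have hu' : K.mulVec (u : Fin N → ℂ) = v := congrArg Subtype.val hu
  have : K⁻¹.mulVec v = (u : Fin N → ℂ) := by
    rw [← hu', Matrix.mulVec_mulVec, hKK, Matrix.one_mulVec]
  rw [this]; exact u.2

/-- Schur: a matrix commuting with an irreducible triple is scalar. -/
lemma schur (q : ℂ) {K E F : Matrix (Fin N) (Fin N) ℂ} (h : IsIrrep q K E F)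
    (M : Matrix (Fin N) (Fin N) ℂ)
    (hK : M * K = K * M) (hE : M * E = E * M) (hF : M * F = F * M) :
    ∃ c : ℂ, M = c • 1 := by
  have hN : 1 ≤ N := h.2.1
  have : Nonempty (Fin N) := ⟨⟨0, hN⟩⟩
  have : Nontrivial (Fin N → ℂ) := inferInstance
  obtain ⟨c, hc⟩ := Module.End.exists_eigenvalue (M.mulVecLin)
  obtain ⟨v₀, hv₀⟩ := hc.exists_hasEigenvector
  refine ⟨c, ?_⟩
  set M' : Matrix (Fin N) (Fin N) ℂ := M - c • 1 with hM'
  have hcomm : ∀ A : Matrix (Fin N) (Fin N) ℂ, M * A = A * M → M' * A = A * M' := by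
    intro A hA
    simp only [hM', Matrix.sub_mul, Matrix.mul_sub, hA, Matrix.smul_mul, Matrix.mul_smul,
      Matrix.one_mul, Matrix.mul_one]
  set W : Submodule ℂ (Fin N → ℂ) := LinearMap.ker M'.mulVecLin with hW
  have hmem : ∀ v, v ∈ W ↔ M'.mulVec v = 0 := fun v => LinearMap.mem_ker
  have hinv : InvariantSub K E F W := by
    refine ⟨?_, ?_, ?_⟩ <;>
      · intro v hv
        rw [hmem] at hv ⊢
        rw [Matrix.mulVec_mulVec]
        first
          | rw [hcomm K hK] | rw [hcomm E hE] | rw [hcomm F hF]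
        rw [← Matrix.mulVec_mulVec, hv, Matrix.mulVec_zero]
  rcases h.2.2 W hinv with hbot | htop
  · exfalso
    have : v₀ ∈ W := by
      rw [hmem, hM', Matrix.sub_mulVec, Matrix.smul_mulVec, Matrix.one_mulVec,
        ← Matrix.mulVecLin_apply, hv₀.apply_eq_smul, sub_self]
    rw [hbot] at this
    exact hv₀.2 this
  · have hz : M'.mulVecLin = 0 := LinearMap.ker_eq_top.mp htop
    have : M' = 0 := by
      ext i j
      have := congrFun (congrArg DFunLike.coe hz) (Pi.single j 1)
      have h2 := congrFun this i
      simpa [Matrix.mulVecLin_apply, Matrix.mulVec_single_one] using h2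
    rw [← sub_eq_zero]; exact this

end Stmt11Aux


namespace Stmt11Aux

set_option maxHeartbeats 1000000 in
/-- Core bound: if `E` is not injective then `N ≤ m`. -/
lemma dim_le (m : ℕ) (hm3 : 3 ≤ m) (q : ℂ) (hq0 : q ≠ 0) (hqm : q ^ m = 1) (hq2 : q ^ 2 ≠ 1)
    {N : ℕ} {K E F : Matrix (Fin N) (Fin N) ℂ} (h : IsIrrep q K E F)
    (hEinj : ¬ Function.Injective E.mulVec) : N ≤ m := by
  obtain ⟨⟨hKu, hrel1, hrel2, hrel3⟩, hN1, hirr⟩ := h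
  have hdet : IsUnit K.det := (Matrix.isUnit_iff_isUnit_det K).mp hKu
  have hKiK : K⁻¹ * K = 1 := Matrix.nonsing_inv_mul K hdet
  have hKKi : K * K⁻¹ = 1 := Matrix.mul_nonsing_inv K hdet
  set c : ℂ := (q - q⁻¹)⁻¹ with hc
  -- basic commutation relations
  have hKE : K * E = q • (E * K) := by
    calc K * E = K * E * (K⁻¹ * K) := by rw [hKiK, Matrix.mul_one]
    _ = (K * E * K⁻¹) * K := by rw [Matrix.mul_assoc (K * E)]
    _ = q • (E * K) := by rw [hrel1, Matrix.smul_mul]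
  have hKF : K * F = q⁻¹ • (F * K) := by
    calc K * F = K * F * (K⁻¹ * K) := by rw [hKiK, Matrix.mul_one]
    _ = (K * F * K⁻¹) * K := by rw [Matrix.mul_assoc (K * F)]
    _ = q⁻¹ • (F * K) := by rw [hrel2, Matrix.smul_mul]
  have hFK : F * K = q • (K * F) := by
    rw [hKF, smul_smul, mul_inv_cancel₀ hq0, one_smul]
  have hKiF : K⁻¹ * F = q • (F * K⁻¹) := by
    calc K⁻¹ * F = K⁻¹ * (F * K) * K⁻¹ := by
          rw [Matrix.mul_assoc, Matrix.mul_assoc, hKKi, Matrix.mul_one]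
    _ = K⁻¹ * (q • (K * F)) * K⁻¹ := by rw [hFK]
    _ = q • (K⁻¹ * K * F * K⁻¹) := by
          rw [Matrix.mul_smul, Matrix.smul_mul, Matrix.mul_assoc K⁻¹ K F]
    _ = q • (F * K⁻¹) := by rw [hKiK, Matrix.one_mul]
  have hK2F : K ^ 2 * F = (q⁻¹ * q⁻¹) • (F * K ^ 2) := by
    calc K ^ 2 * F = K * (K * F) := by rw [pow_two, Matrix.mul_assoc]
    _ = K * (q⁻¹ • (F * K)) := by rw [hKF]
    _ = q⁻¹ • (K * F * K) := by rw [Matrix.mul_smul, Matrix.mul_assoc]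
    _ = q⁻¹ • ((q⁻¹ • (F * K)) * K) := by rw [hKF]
    _ = (q⁻¹ * q⁻¹) • (F * K ^ 2) := by
          rw [Matrix.smul_mul, smul_smul, Matrix.mul_assoc, pow_two K]
  have hKi2F : K⁻¹ ^ 2 * F = (q * q) • (F * K⁻¹ ^ 2) := by
    calc K⁻¹ ^ 2 * F = K⁻¹ * (K⁻¹ * F) := by rw [pow_two, Matrix.mul_assoc]
    _ = K⁻¹ * (q • (F * K⁻¹)) := by rw [hKiF]
    _ = q • (K⁻¹ * F * K⁻¹) := by rw [Matrix.mul_smul, Matrix.mul_assoc]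
    _ = q • ((q • (F * K⁻¹)) * K⁻¹) := by rw [hKiF]
    _ = (q * q) • (F * K⁻¹ ^ 2) := by
          rw [Matrix.smul_mul, smul_smul, Matrix.mul_assoc, pow_two K⁻¹]
  -- K * F^p commutation
  have hKFp : ∀ p : ℕ, K * F ^ p = (q⁻¹) ^ p • (F ^ p * K) := by
    intro p
    induction p with
    | zero => simp
    | succ p ih =>
      calc K * F ^ (p + 1) = (K * F ^ p) * F := by rw [pow_succ, Matrix.mul_assoc]
      _ = ((q⁻¹) ^ p • (F ^ p * K)) * F := by rw [ih]
      _ = (q⁻¹) ^ p • (F ^ p * (K * F)) := by rw [Matrix.smul_mul, Matrix.mul_assoc]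
      _ = (q⁻¹) ^ p • (F ^ p * (q⁻¹ • (F * K))) := by rw [hKF]
      _ = (q⁻¹) ^ (p + 1) • (F ^ (p + 1) * K) := by
            rw [Matrix.mul_smul, smul_smul, ← pow_succ, pow_succ F, Matrix.mul_assoc]
  -- commutator formula
  set a : ℕ → ℂ := fun p => c * ∑ j ∈ Finset.range (p + 1), ((q⁻¹) ^ 2) ^ j with ha
  set b : ℕ → ℂ := fun p => c * ∑ j ∈ Finset.range (p + 1), (q ^ 2) ^ j with hb
  have hcomm : ∀ p : ℕ, E * F ^ (p + 1) - F ^ (p + 1) * E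
      = F ^ p * (a p • K ^ 2 - b p • K⁻¹ ^ 2) := by
    intro p
    induction p with
    | zero =>
      simp only [ha, hb, zero_add, pow_one, Finset.range_one, Finset.sum_singleton, pow_zero,
        mul_one, Matrix.one_mul]
      rw [hrel3, smul_sub]
    | succ p ih =>
      have step : E * F ^ (p + 2) - F ^ (p + 2) * E
          = (E * F ^ (p + 1) - F ^ (p + 1) * E) * F + F ^ (p + 1) * (E * F - F * E) := by
        have h1 : F ^ (p + 2) = F ^ (p + 1) * F := pow_succ F (p + 1)
        rw [h1]
        noncomm_ring
      have expand : (a p • K ^ 2 - b p • K⁻¹ ^ 2) * F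
          = F * ((a p * (q⁻¹ * q⁻¹)) • K ^ 2 - (b p * (q * q)) • K⁻¹ ^ 2) := by
        rw [Matrix.sub_mul, Matrix.smul_mul, Matrix.smul_mul, hK2F, hKi2F,
          Matrix.mul_sub, smul_smul, smul_smul, Matrix.mul_smul, Matrix.mul_smul]
      have ha' : a (p + 1) = a p * (q⁻¹ * q⁻¹) + c := by
        simp only [ha, geom_sum_succ]
        ring
      have hb' : b (p + 1) = b p * (q * q) + c := by
        simp only [hb, geom_sum_succ]
        ring
      rw [step, ih, hrel3]
      calc F ^ p * (a p • K ^ 2 - b p • K⁻¹ ^ 2) * F + F ^ (p + 1) * (c • (K ^ 2 - K⁻¹ ^ 2))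
          = F ^ (p + 1) * ((a p * (q⁻¹ * q⁻¹)) • K ^ 2 - (b p * (q * q)) • K⁻¹ ^ 2)
            + F ^ (p + 1) * (c • (K ^ 2 - K⁻¹ ^ 2)) := by
            rw [Matrix.mul_assoc, expand, ← Matrix.mul_assoc, ← pow_succ]
      _ = F ^ (p + 1) * (((a p * (q⁻¹ * q⁻¹)) • K ^ 2 - (b p * (q * q)) • K⁻¹ ^ 2)
            + c • (K ^ 2 - K⁻¹ ^ 2)) := by rw [Matrix.mul_add]
      _ = F ^ (p + 1) * (a (p + 1) • K ^ 2 - b (p + 1) • K⁻¹ ^ 2) := by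
            congr 1
            rw [ha', hb']
            module
  -- the coefficients vanish at p = m - 1
  have hm1 : m - 1 + 1 = m := by omega
  have hm0 : 0 < m := by omega
  have hsumz : ∀ x : ℂ, x ≠ 1 → x ^ m = 1 → ∑ j ∈ Finset.range m, x ^ j = 0 := by
    intro x hx1 hxm
    rw [geom_sum_eq hx1, hxm, sub_self, zero_div]
  have hq2' : ((q⁻¹) ^ 2 : ℂ) ≠ 1 := by
    intro hcon
    rw [inv_pow, inv_eq_one] at hcon
    exact hq2 hcon
  have ham : a (m - 1) = 0 := by
    rw [ha]
    simp only [hm1]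
    rw [hsumz _ hq2' (by rw [inv_pow, inv_pow, ← pow_mul, mul_comm 2 m, pow_mul, hqm, one_pow,
      inv_one]), mul_zero]
  have hbm : b (m - 1) = 0 := by
    rw [hb]
    simp only [hm1]
    rw [hsumz _ hq2 (by rw [← pow_mul, mul_comm 2 m, pow_mul, hqm, one_pow]), mul_zero]
  -- E commutes with F^m
  have hEFm : E * F ^ m = F ^ m * E := by
    have := hcomm (m - 1)
    rw [hm1, ham, hbm, zero_smul, zero_smul, sub_zero, Matrix.mul_zero, sub_eq_zero] at this
    exact this
  -- K commutes with F^m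
  have hKFm : K * F ^ m = F ^ m * K := by
    have := hKFp m
    rw [inv_pow, hqm, inv_one, one_smul] at this
    exact this
  -- Schur: F^m is scalar
  obtain ⟨c₀, hc₀⟩ := schur q ⟨⟨hKu, hrel1, hrel2, hrel3⟩, hN1, hirr⟩ (F ^ m)
    hKFm.symm hEFm.symm (by rw [← pow_succ, ← pow_succ'])
  -- eigenvector of K in the kernel of E
  have hUne : LinearMap.ker E.mulVecLin ≠ ⊥ := by
    intro hbot
    apply hEinj
    have : Function.Injective E.mulVecLin := LinearMap.ker_eq_bot.mp hbot
    simpa [Matrix.coe_mulVecLin] using this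
  have : Nontrivial (LinearMap.ker E.mulVecLin) := Submodule.nontrivial_iff_ne_bot.mpr hUne
  have hmaps : ∀ x ∈ LinearMap.ker E.mulVecLin, K.mulVecLin x ∈ LinearMap.ker E.mulVecLin := by
    intro x hx
    rw [LinearMap.mem_ker] at hx ⊢
    have hEK : E * K = q⁻¹ • (K * E) := by
      rw [hKE, smul_smul, inv_mul_cancel₀ hq0, one_smul]
    simp only [Matrix.mulVecLin_apply] at hx ⊢
    rw [Matrix.mulVec_mulVec, hEK, Matrix.smul_mulVec, ← Matrix.mulVec_mulVec, hx,
      Matrix.mulVec_zero, smul_zero]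
  obtain ⟨lam, hlam⟩ := Module.End.exists_eigenvalue ((K.mulVecLin).restrict hmaps)
  obtain ⟨u, hu⟩ := hlam.exists_hasEigenvector
  set v : Fin N → ℂ := (u : Fin N → ℂ) with hv
  have hvne : v ≠ 0 := by
    intro h0
    exact hu.2 (Subtype.ext (by simpa [hv] using h0))
  have hEv : E.mulVec v = 0 := by
    have h2 : E.mulVecLin v = 0 := LinearMap.mem_ker.mp u.2
    rwa [Matrix.mulVecLin_apply] at h2
  have hKv : K.mulVec v = lam • v := by
    have h2 := congrArg Subtype.val hu.apply_eq_smul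
    rw [LinearMap.restrict_apply] at h2
    simpa [Matrix.mulVecLin_apply, hv] using h2
  have hlamne : lam ≠ 0 := by
    intro h0
    apply hvne
    have hz : K.mulVec v = 0 := by rw [hKv, h0, zero_smul]
    have h2 := congrArg K⁻¹.mulVec hz
    rwa [Matrix.mulVec_mulVec, hKiK, Matrix.one_mulVec, Matrix.mulVec_zero] at h2
  have hKiv : K⁻¹.mulVec v = lam⁻¹ • v := by
    have h2 := congrArg K⁻¹.mulVec hKv
    rw [Matrix.mulVec_mulVec, hKiK, Matrix.one_mulVec, Matrix.mulVec_smul] at h2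
    calc K⁻¹.mulVec v = lam⁻¹ • (lam • K⁻¹.mulVec v) := by
          rw [smul_smul, inv_mul_cancel₀ hlamne, one_smul]
    _ = lam⁻¹ • v := by rw [← h2]
  have hK2v : (K ^ 2).mulVec v = (lam * lam) • v := by
    rw [pow_two, ← Matrix.mulVec_mulVec, hKv, Matrix.mulVec_smul, hKv, smul_smul]
  have hKi2v : (K⁻¹ ^ 2).mulVec v = (lam⁻¹ * lam⁻¹) • v := by
    rw [pow_two, ← Matrix.mulVec_mulVec, hKiv, Matrix.mulVec_smul, hKiv, smul_smul]
  -- the span of F^p v, p < m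
  set g : Fin m → (Fin N → ℂ) := fun p => (F ^ (p : ℕ)).mulVec v with hg
  set W : Submodule ℂ (Fin N → ℂ) := Submodule.span ℂ (Set.range g) with hWdef
  have hgmem : ∀ p, g p ∈ W := fun p => Submodule.subset_span ⟨p, rfl⟩
  have hWinv : InvariantSub K E F W := by
    have key : ∀ A : Matrix (Fin N) (Fin N) ℂ, (∀ p : Fin m, A.mulVec (g p) ∈ W) →
        ∀ w ∈ W, A.mulVec w ∈ W := by
      intro A hA w hw
      have hle : W.map A.mulVecLin ≤ W := by
        rw [hWdef, Submodule.map_span, Submodule.span_le]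
        rintro _ ⟨_, ⟨p, rfl⟩, rfl⟩
        simpa [Matrix.mulVecLin_apply] using hA p
      exact hle ⟨w, hw, by simp [Matrix.mulVecLin_apply]⟩
    refine ⟨?_, ?_, ?_⟩
    · refine key K ?_
      intro p
      have hstep : K.mulVec (g p) = ((q⁻¹) ^ (p : ℕ) * lam) • g p := by
        rw [hg]
        rw [Matrix.mulVec_mulVec, hKFp, Matrix.smul_mulVec, ← Matrix.mulVec_mulVec,
          hKv, Matrix.mulVec_smul, smul_smul]
      rw [hstep]
      exact W.smul_mem _ (hgmem p)
    · refine key E ?_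
      intro p
      rcases Nat.eq_zero_or_pos (p : ℕ) with hp0 | hppos
      · have hstep : E.mulVec (g p) = 0 := by
          rw [hg]; simp only [hp0, pow_zero, Matrix.one_mulVec]; exact hEv
        rw [hstep]; exact W.zero_mem
      · obtain ⟨j, hj⟩ : ∃ j, (p : ℕ) = j + 1 := ⟨(p : ℕ) - 1, by omega⟩
        have hjlt : j < m := by have := p.isLt; omega
        have hE1 : E * F ^ (j + 1) = F ^ (j + 1) * E + F ^ j * (a j • K ^ 2 - b j • K⁻¹ ^ 2) := by
          have h2 := hcomm j
          rw [sub_eq_iff_eq_add] at h2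
          rw [h2]; abel
        have hstep : E.mulVec (g p)
            = (a j * (lam * lam) - b j * (lam⁻¹ * lam⁻¹)) • g ⟨j, hjlt⟩ := by
          rw [hg]
          simp only [hj]
          rw [Matrix.mulVec_mulVec, hE1, Matrix.add_mulVec, ← Matrix.mulVec_mulVec, hEv,
            Matrix.mulVec_zero, zero_add, ← Matrix.mulVec_mulVec, Matrix.sub_mulVec,
            Matrix.smul_mulVec, Matrix.smul_mulVec, hK2v, hKi2v,
            smul_smul, smul_smul, ← sub_smul, Matrix.mulVec_smul]
        rw [hstep]
        exact W.smul_mem _ (hgmem _)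
    · refine key F ?_
      intro p
      rcases Nat.lt_or_ge ((p : ℕ) + 1) m with hlt | hge
      · have hstep : F.mulVec (g p) = g ⟨(p : ℕ) + 1, hlt⟩ := by
          rw [hg]
          simp only [Matrix.mulVec_mulVec, ← pow_succ']
        rw [hstep]; exact hgmem _
      · have hpm : (p : ℕ) + 1 = m := by have := p.isLt; omega
        have hstep : F.mulVec (g p) = c₀ • g ⟨0, hm0⟩ := by
          simp only [hg, Matrix.mulVec_mulVec, ← pow_succ', hpm, hc₀, Fin.val_mk, pow_zero,
            Matrix.smul_mulVec, Matrix.one_mulVec]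
        rw [hstep]
        exact W.smul_mem _ (hgmem _)
  have hWne : W ≠ ⊥ := by
    intro hbot
    apply hvne
    have hmem0 : g ⟨0, hm0⟩ ∈ W := hgmem _
    rw [hbot, Submodule.mem_bot] at hmem0
    rw [← hmem0, hg]
    simp
  have hWtop : W = ⊤ := (hirr W hWinv).resolve_left hWne
  have hfin : Module.finrank ℂ (Fin N → ℂ) ≤ Fintype.card (Fin m) :=
    finrank_le_of_span_eq_top (by rw [← hWdef]; exact hWtop)
  simpa [Module.finrank_fin_fun] using hfin

end Stmt11Aux

namespace Stmt11Aux

/-- Swapping the roles of `E` and `F` (replacing `K` by `K⁻¹`) preserves irreducibility. -/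
lemma swap (q : ℂ) (hq0 : q ≠ 0) {N : ℕ} {K E F : Matrix (Fin N) (Fin N) ℂ}
    (h : IsIrrep q K E F) : IsIrrep q K⁻¹ F E := by
  obtain ⟨⟨hKu, hrel1, hrel2, hrel3⟩, hN1, hirr⟩ := h
  have hdet : IsUnit K.det := (Matrix.isUnit_iff_isUnit_det K).mp hKu
  have hKiK : K⁻¹ * K = 1 := Matrix.nonsing_inv_mul K hdet
  have hKKi : K * K⁻¹ = 1 := Matrix.mul_nonsing_inv K hdet
  have hKinv : K⁻¹⁻¹ = K := Matrix.nonsing_inv_nonsing_inv K hdet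
  have hKiu : IsUnit K⁻¹ := ⟨⟨K⁻¹, K, hKiK, hKKi⟩, rfl⟩
  refine ⟨⟨hKiu, ?_, ?_, ?_⟩, hN1, ?_⟩
  · -- K⁻¹ * F * K = q • F
    rw [hKinv]
    have h1 : K⁻¹ * (K * F * K⁻¹) * K = F := by
      rw [← Matrix.mul_assoc, ← Matrix.mul_assoc, hKiK, Matrix.one_mul, Matrix.mul_assoc,
        hKiK, Matrix.mul_one]
    rw [hrel2] at h1
    have h2 : K⁻¹ * (q⁻¹ • F) * K = q⁻¹ • (K⁻¹ * F * K) := by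
      rw [Matrix.mul_smul, Matrix.smul_mul]
    rw [h2] at h1
    calc K⁻¹ * F * K = (q * q⁻¹) • (K⁻¹ * F * K) := by
          rw [mul_inv_cancel₀ hq0, one_smul]
    _ = q • (q⁻¹ • (K⁻¹ * F * K)) := by rw [smul_smul]
    _ = q • F := by rw [h1]
  · -- K⁻¹ * E * K = q⁻¹ • E
    rw [hKinv]
    have h1 : K⁻¹ * (K * E * K⁻¹) * K = E := by
      rw [← Matrix.mul_assoc, ← Matrix.mul_assoc, hKiK, Matrix.one_mul, Matrix.mul_assoc,
        hKiK, Matrix.mul_one]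
    rw [hrel1] at h1
    have h2 : K⁻¹ * (q • E) * K = q • (K⁻¹ * E * K) := by
      rw [Matrix.mul_smul, Matrix.smul_mul]
    rw [h2] at h1
    calc K⁻¹ * E * K = (q⁻¹ * q) • (K⁻¹ * E * K) := by
          rw [inv_mul_cancel₀ hq0, one_smul]
    _ = q⁻¹ • (q • (K⁻¹ * E * K)) := by rw [smul_smul]
    _ = q⁻¹ • E := by rw [h1]
  · -- F * E - E * F = c • ((K⁻¹)^2 - (K⁻¹)⁻¹^2)
    rw [hKinv]
    have h1 : F * E - E * F = -(E * F - F * E) := by noncomm_ring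
    rw [h1, hrel3, ← smul_neg, neg_sub]
  · -- irreducibility
    intro W hW
    obtain ⟨hWKi, hWF, hWE⟩ := hW
    have hWK : ∀ v ∈ W, K.mulVec v ∈ W := by
      have := closed_inv hKiu hWKi
      rwa [hKinv] at this
    exact hirr W ⟨hWK, hWE, hWF⟩

end Stmt11Aux

/-- If `(K, E, F)` is an irreducible representation of `U_q(sl(2))` of dimension `N ≥ m`
(with `q` a primitive `m`-th root of unity, `m ≥ 3`) such that `E` or `F` is not injective,
then `N = m`. -/
theorem stmt11 (m : ℕ) (hm : 3 ≤ m) (q : ℂ) (hq : IsPrimitiveRoot q m)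
    (N : ℕ) (hN : m ≤ N) (K E F : Matrix (Fin N) (Fin N) ℂ)
    (h : IsIrrep q K E F)
    (hEF : ¬ Function.Injective E.mulVec ∨ ¬ Function.Injective F.mulVec) :
    N = m := by
  have hq0 : q ≠ 0 := by
    intro h0
    have := hq.pow_eq_one
    rw [h0, zero_pow (by omega : m ≠ 0)] at this
    exact zero_ne_one this
  have hqm : q ^ m = 1 := hq.pow_eq_one
  have hq2 : q ^ 2 ≠ 1 := by
    intro h2
    have hdvd : m ∣ 2 := hq.dvd_of_pow_eq_one 2 h2
    have := Nat.le_of_dvd (by norm_num) hdvd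
    omega
  have hle : N ≤ m := by
    rcases hEF with hE | hF
    · exact Stmt11Aux.dim_le m hm q hq0 hqm hq2 h hE
    · exact Stmt11Aux.dim_le m hm q hq0 hqm hq2 (Stmt11Aux.swap q hq0 h) hF
  omega
end
end

section
/- Let m ≥ 3 and let q ∈ ℂ be a primitive m-th root of unity. Then every irreducible representation of U_q(sl(2)) has dimension at most m: if (K, E, F) is an irreducible representation of dimension N then N ≤ m. -/
open Matrix

noncomputable section

namespace Stmt12Aux

open Finset

variable {N : ℕ}

lemma conj_to_comm {K A : Matrix (Fin N) (Fin N) ℂ} {c : ℂ}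
    (hK1 : K⁻¹ * K = 1) (h : K * A * K⁻¹ = c • A) : K * A = c • (A * K) := by
  calc K * A = K * A * (K⁻¹ * K) := by rw [hK1, mul_one]
    _ = (K * A * K⁻¹) * K := by rw [mul_assoc (K * A)]
    _ = (c • A) * K := by rw [h]
    _ = c • (A * K) := smul_mul_assoc _ _ _

lemma comm_to_inv {K A : Matrix (Fin N) (Fin N) ℂ} {c : ℂ} (hc : c ≠ 0)
    (hK1 : K⁻¹ * K = 1) (hKK1 : K * K⁻¹ = 1) (h : K * A = c • (A * K)) :
    K⁻¹ * A = c⁻¹ • (A * K⁻¹) := by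
  have h2 : A * K⁻¹ = c • (K⁻¹ * A) := by
    calc A * K⁻¹ = (K⁻¹ * K) * (A * K⁻¹) := by rw [hK1, one_mul]
      _ = K⁻¹ * (K * A) * K⁻¹ := by rw [mul_assoc, ← mul_assoc K A, ← mul_assoc, ← mul_assoc]
      _ = K⁻¹ * (c • (A * K)) * K⁻¹ := by rw [h]
      _ = c • (K⁻¹ * A * (K * K⁻¹)) := by
            rw [mul_smul_comm, smul_mul_assoc, mul_assoc, mul_assoc, mul_assoc]
      _ = c • (K⁻¹ * A) := by rw [hKK1, mul_one]
  rw [h2, smul_smul, inv_mul_cancel₀ hc, one_smul]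

lemma K_pow_comm {K A : Matrix (Fin N) (Fin N) ℂ} {c : ℂ}
    (h : K * A = c • (A * K)) : ∀ j : ℕ, K * A ^ j = c ^ j • (A ^ j * K)
  | 0 => by simp
  | (j+1) => by
    calc K * A ^ (j+1) = (K * A ^ j) * A := by rw [mul_assoc, ← pow_succ]
      _ = (c ^ j • (A ^ j * K)) * A := by rw [K_pow_comm h j]
      _ = c ^ j • (A ^ j * (K * A)) := by rw [smul_mul_assoc, mul_assoc]
      _ = c ^ j • (A ^ j * (c • (A * K))) := by rw [h]
      _ = (c ^ j * c) • (A ^ j * A * K) := by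
            rw [mul_smul_comm, smul_smul, mul_assoc]
      _ = c ^ (j+1) • (A ^ (j+1) * K) := by rw [pow_succ, pow_succ]

lemma sq_comm {K A : Matrix (Fin N) (Fin N) ℂ} {c : ℂ}
    (h : K * A = c • (A * K)) : K ^ 2 * A = (c * c) • (A * K ^ 2) := by
  calc K ^ 2 * A = K * (K * A) := by rw [pow_two, mul_assoc]
    _ = K * (c • (A * K)) := by rw [h]
    _ = c • ((K * A) * K) := by rw [mul_smul_comm, mul_assoc]
    _ = c • ((c • (A * K)) * K) := by rw [h]
    _ = (c * c) • (A * (K * K)) := by rw [smul_mul_assoc, smul_smul, mul_assoc]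
    _ = (c * c) • (A * K ^ 2) := by rw [pow_two]

lemma mul_comm_K {K A B : Matrix (Fin N) (Fin N) ℂ} {c d : ℂ}
    (hA : K * A = c • (A * K)) (hB : K * B = d • (B * K)) :
    K * (A * B) = (c * d) • (A * B * K) := by
  calc K * (A * B) = (K * A) * B := by rw [mul_assoc]
    _ = c • (A * (K * B)) := by rw [hA, smul_mul_assoc, mul_assoc]
    _ = c • (A * (d • (B * K))) := by rw [hB]
    _ = (c * d) • (A * B * K) := by rw [mul_smul_comm, smul_smul, mul_assoc]

lemma comm_pow {q : ℂ} {K E F : Matrix (Fin N) (Fin N) ℂ}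
    (hK2F : K ^ 2 * F = (q⁻¹ * q⁻¹) • (F * K ^ 2))
    (hKi2F : K⁻¹ ^ 2 * F = (q * q) • (F * K⁻¹ ^ 2))
    (hEF : E * F - F * E = (q - q⁻¹)⁻¹ • (K ^ 2 - K⁻¹ ^ 2)) :
    ∀ j : ℕ, E * F ^ (j+1) - F ^ (j+1) * E
      = (q - q⁻¹)⁻¹ • (F ^ j * ((∑ i ∈ range (j+1), (q⁻¹ * q⁻¹) ^ i) • K ^ 2
          - (∑ i ∈ range (j+1), (q * q) ^ i) • K⁻¹ ^ 2))
  | 0 => by simpa using hEF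
  | (j+1) => by
    have expand : E * F ^ (j+2) - F ^ (j+2) * E
        = (E * F ^ (j+1) - F ^ (j+1) * E) * F + F ^ (j+1) * (E * F - F * E) := by
      rw [pow_succ F (j+1)]
      noncomm_ring
    rw [expand, comm_pow hK2F hKi2F hEF j, hEF]
    rw [geom_sum_succ (n := j+1), geom_sum_succ (x := q*q) (n := j+1)]
    rw [smul_mul_assoc, mul_assoc, sub_mul, smul_mul_assoc, smul_mul_assoc, hK2F, hKi2F,
      pow_succ F j]
    simp only [mul_sub, sub_mul, smul_sub, mul_smul_comm, smul_mul_assoc, smul_smul, mul_assoc]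
    match_scalars <;> ring

/-- eigenvector of `A` inside a nonzero `A`-invariant subspace -/
lemma eig_in (A : Matrix (Fin N) (Fin N) ℂ) (V : Submodule ℂ (Fin N → ℂ))
    (hV : V ≠ ⊥) (hAV : ∀ x ∈ V, A.mulVec x ∈ V) :
    ∃ v ∈ V, v ≠ 0 ∧ ∃ a : ℂ, A.mulVec v = a • v := by
  haveI : Nontrivial V := Submodule.nontrivial_iff_ne_bot.mpr hV
  have hmap : ∀ x ∈ V, A.mulVecLin x ∈ V := by
    simpa [Matrix.mulVecLin_apply] using hAV
  set T := (A.mulVecLin).restrict hmap with hT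
  obtain ⟨a, ha⟩ := Module.End.exists_eigenvalue T
  obtain ⟨w, hw, hw0⟩ := Submodule.exists_mem_ne_zero_of_ne_bot ha
  refine ⟨(w : Fin N → ℂ), w.2, by simpa using hw0, a, ?_⟩
  have hTw : T w = a • w := Module.End.mem_eigenspace_iff.mp hw
  have := congrArg (Subtype.val) hTw
  simpa [hT, LinearMap.restrict_apply, Matrix.mulVecLin_apply] using this

lemma schur (hN : 1 ≤ N) (K E F C : Matrix (Fin N) (Fin N) ℂ)
    (hirr : ∀ W : Submodule ℂ (Fin N → ℂ), InvariantSub K E F W → W = ⊥ ∨ W = ⊤)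
    (hCK : C * K = K * C) (hCE : C * E = E * C) (hCF : C * F = F * C) :
    ∃ c : ℂ, ∀ x, C.mulVec x = c • x := by
  haveI : Nonempty (Fin N) := Fin.pos_iff_nonempty.mp hN
  obtain ⟨c, hc⟩ := Module.End.exists_eigenvalue (C.mulVecLin)
  set V := Module.End.eigenspace C.mulVecLin c with hV
  have hmem : ∀ x, x ∈ V ↔ C.mulVec x = c • x := by
    intro x
    rw [hV, Module.End.mem_eigenspace_iff, Matrix.mulVecLin_apply]
  have key : ∀ A : Matrix (Fin N) (Fin N) ℂ, C * A = A * C → ∀ x ∈ V, A.mulVec x ∈ V := by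
    intro A hA x hx
    rw [hmem] at hx ⊢
    rw [mulVec_mulVec, hA, ← mulVec_mulVec, hx, mulVec_smul]
  rcases hirr V ⟨key K hCK, key E hCE, key F hCF⟩ with h | h
  · exact absurd h hc
  · exact ⟨c, fun x => (hmem x).mp (h ▸ Submodule.mem_top)⟩

lemma span_stable (A : Matrix (Fin N) (Fin N) ℂ) (s : Set (Fin N → ℂ))
    (h : ∀ x ∈ s, A.mulVec x ∈ Submodule.span ℂ s) :
    ∀ x ∈ Submodule.span ℂ s, A.mulVec x ∈ Submodule.span ℂ s := by
  intro x hx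
  have hle : Submodule.span ℂ s ≤ (Submodule.span ℂ s).comap A.mulVecLin :=
    Submodule.span_le.mpr fun y hy => by
      simpa [Submodule.mem_comap, Matrix.mulVecLin_apply] using h y hy
  simpa [Submodule.mem_comap, Matrix.mulVecLin_apply] using hle hx

lemma chain {m : ℕ} (hm1 : 1 ≤ m) {q : ℂ} (hq0 : q ≠ 0)
    {K E F : Matrix (Fin N) (Fin N) ℂ}
    (hK1 : K⁻¹ * K = 1)
    (hKF : K * F = q⁻¹ • (F * K))
    (hEF : E * F - F * E = (q - q⁻¹)⁻¹ • (K ^ 2 - K⁻¹ ^ 2))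
    (hirr : ∀ W : Submodule ℂ (Fin N → ℂ), InvariantSub K E F W → W = ⊥ ∨ W = ⊤)
    {f : ℂ} (hf : ∀ x, (F ^ m).mulVec x = f • x)
    {v : Fin N → ℂ} (hv : v ≠ 0) {lam : ℂ} (hKv : K.mulVec v = lam • v)
    (hEv : E.mulVec v ∈ Submodule.span ℂ (Set.range fun j : Fin m => (F ^ (j : ℕ)).mulVec v)) :
    N ≤ m := by
  set u : ℕ → (Fin N → ℂ) := fun j => (F ^ j).mulVec v with hu
  set s : Set (Fin N → ℂ) := Set.range fun j : Fin m => u j with hs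
  set W : Submodule ℂ (Fin N → ℂ) := Submodule.span ℂ s with hW
  have u0 : u 0 = v := by simp [hu]
  have usucc : ∀ j, u (j + 1) = F.mulVec (u j) := by
    intro j; rw [hu]; simp only; rw [pow_succ', ← mulVec_mulVec]
  have hlam : lam ≠ 0 := by
    intro h0
    apply hv
    have : K⁻¹.mulVec (K.mulVec v) = v := by rw [mulVec_mulVec, hK1, one_mulVec]
    rw [hKv, h0, zero_smul, mulVec_zero] at this
    exact this.symm
  have hKu : ∀ j, K.mulVec (u j) = (lam * (q⁻¹) ^ j) • u j := by
    intro j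
    induction j with
    | zero => simpa [u0] using hKv
    | succ j ih =>
      rw [usucc, mulVec_mulVec, hKF, smul_mulVec, ← mulVec_mulVec, ih, mulVec_smul,
        smul_smul]
      congr 1
      ring
  have hcne : ∀ j : ℕ, lam * (q⁻¹) ^ j ≠ 0 := fun j =>
    mul_ne_zero hlam (pow_ne_zero _ (inv_ne_zero hq0))
  have hKiu : ∀ j, K⁻¹.mulVec (u j) = (lam * (q⁻¹) ^ j)⁻¹ • u j := by
    intro j
    have h1 : u j = (lam * (q⁻¹) ^ j)⁻¹ • K.mulVec (u j) := by
      rw [hKu, smul_smul, inv_mul_cancel₀ (hcne j), one_smul]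
    calc K⁻¹.mulVec (u j) = K⁻¹.mulVec ((lam * (q⁻¹) ^ j)⁻¹ • K.mulVec (u j)) := by rw [← h1]
      _ = (lam * (q⁻¹) ^ j)⁻¹ • (K⁻¹ * K).mulVec (u j) := by rw [mulVec_smul, mulVec_mulVec]
      _ = (lam * (q⁻¹) ^ j)⁻¹ • u j := by rw [hK1, one_mulVec]
  have hum : ∀ j, u (j + m) = f • u j := by
    intro j
    rw [hu]; simp only
    rw [pow_add, ← mulVec_mulVec, hf, mulVec_smul]
  have humem : ∀ j, u j ∈ W := by
    intro j
    induction j using Nat.strong_induction_on with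
    | _ j ih =>
      rcases lt_or_ge j m with hj | hj
      · exact Submodule.subset_span ⟨⟨j, hj⟩, rfl⟩
      · have : j - m + m = j := Nat.sub_add_cancel hj
        have h2 := hum (j - m)
        rw [this] at h2
        rw [h2]
        exact Submodule.smul_mem _ _ (ih (j - m) (by omega))
  have hFW : ∀ x ∈ W, F.mulVec x ∈ W := by
    apply span_stable
    rintro x ⟨j, rfl⟩
    simp only
    rw [← usucc]
    exact humem _
  have hXu : ∀ j, ((q - q⁻¹)⁻¹ • (K ^ 2 - K⁻¹ ^ 2)).mulVec (u j)
      = ((q - q⁻¹)⁻¹ * ((lam * (q⁻¹) ^ j) * (lam * (q⁻¹) ^ j)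
          - (lam * (q⁻¹) ^ j)⁻¹ * (lam * (q⁻¹) ^ j)⁻¹)) • u j := by
    intro j
    rw [smul_mulVec, sub_mulVec]
    rw [pow_two, pow_two, ← mulVec_mulVec, ← mulVec_mulVec, hKu, hKiu,
      mulVec_smul, mulVec_smul, hKu, hKiu, smul_smul, smul_smul, smul_sub, smul_smul,
      smul_smul, ← sub_smul, mul_sub]
  have hEu : ∀ j, E.mulVec (u j) ∈ W := by
    intro j
    induction j with
    | zero => rw [u0]; exact hEv
    | succ j ih =>
      have hEFs : E * F = F * E + (q - q⁻¹)⁻¹ • (K ^ 2 - K⁻¹ ^ 2) := by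
        rw [← hEF]; noncomm_ring
      rw [usucc, mulVec_mulVec, hEFs, add_mulVec, ← mulVec_mulVec, hXu]
      exact Submodule.add_mem _ (hFW _ ih) (Submodule.smul_mem _ _ (humem j))
  have hKW : ∀ x ∈ W, K.mulVec x ∈ W := by
    apply span_stable
    rintro x ⟨j, rfl⟩
    simp only
    rw [hKu]
    exact Submodule.smul_mem _ _ (humem _)
  have hEW : ∀ x ∈ W, E.mulVec x ∈ W := by
    apply span_stable
    rintro x ⟨j, rfl⟩
    exact hEu _
  have hWtop : W = ⊤ := by
    rcases hirr W ⟨hKW, hEW, hFW⟩ with h | h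
    · exfalso
      apply hv
      have : v ∈ W := u0 ▸ humem 0
      rw [h, Submodule.mem_bot] at this
      exact this
    · exact h
  have h1 : Module.finrank ℂ W ≤ m := by
    have := finrank_range_le_card (R := ℂ) (fun j : Fin m => u j)
    simpa [Set.finrank, hW, hs] using this
  have h2 : Module.finrank ℂ W = N := by
    rw [hWtop, finrank_top]
    simp
  omega

end Stmt12Aux

/-- Every irreducible representation of `U_q(sl(2))` (with `q` a primitive `m`-th root of
unity, `m ≥ 3`) has dimension at most `m`. -/
theorem stmt12 (m : ℕ) (hm : 3 ≤ m) (q : ℂ) (hq : IsPrimitiveRoot q m)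
    (N : ℕ) (K E F : Matrix (Fin N) (Fin N) ℂ)
    (h : IsIrrep q K E F) :
    N ≤ m := by
  classical
  obtain ⟨⟨hK, hKEc, hKFc, hEF⟩, hN, hirr⟩ := h
  have hm1 : 1 ≤ m := by omega
  have hm0 : m ≠ 0 := by omega
  have hq0 : q ≠ 0 := hq.ne_zero hm0
  have hdet : IsUnit K.det := (Matrix.isUnit_iff_isUnit_det K).mp hK
  have hK1 : K⁻¹ * K = 1 := Matrix.nonsing_inv_mul K hdet
  have hKK1 : K * K⁻¹ = 1 := Matrix.mul_nonsing_inv K hdet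
  have hqm : q ^ m = 1 := hq.pow_eq_one
  have hq2 : q * q ≠ 1 := by
    intro hcon
    have : m ∣ 2 := hq.dvd_of_pow_eq_one 2 (by rw [pow_two]; exact hcon)
    have := Nat.le_of_dvd (by norm_num) this
    omega
  have hΔ : q - q⁻¹ ≠ 0 := by
    rw [sub_ne_zero]
    intro hcon
    apply hq2
    calc q * q = q * q⁻¹ := by rw [← hcon]
      _ = 1 := mul_inv_cancel₀ hq0
  -- commutation relations
  have hKE : K * E = q • (E * K) := Stmt12Aux.conj_to_comm hK1 hKEc
  have hKF : K * F = q⁻¹ • (F * K) := Stmt12Aux.conj_to_comm hK1 hKFc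
  have hKiE : K⁻¹ * E = q⁻¹ • (E * K⁻¹) := Stmt12Aux.comm_to_inv hq0 hK1 hKK1 hKE
  have hKiF : K⁻¹ * F = q • (F * K⁻¹) := by
    have := Stmt12Aux.comm_to_inv (inv_ne_zero hq0) hK1 hKK1 hKF
    rwa [inv_inv] at this
  have hK2F : K ^ 2 * F = (q⁻¹ * q⁻¹) • (F * K ^ 2) := Stmt12Aux.sq_comm hKF
  have hKi2F : K⁻¹ ^ 2 * F = (q * q) • (F * K⁻¹ ^ 2) := Stmt12Aux.sq_comm hKiF
  have hK2E : K ^ 2 * E = (q * q) • (E * K ^ 2) := Stmt12Aux.sq_comm hKE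
  have hKi2E : K⁻¹ ^ 2 * E = (q⁻¹ * q⁻¹) • (E * K⁻¹ ^ 2) := Stmt12Aux.sq_comm hKiE
  -- vanishing geometric sums
  have hsum2 : ∑ i ∈ Finset.range m, (q * q) ^ i = 0 := by
    rw [geom_sum_eq hq2 m]
    have : (q * q) ^ m = 1 := by rw [mul_pow, hqm, one_mul]
    rw [this, sub_self, zero_div]
  have hqi2 : q⁻¹ * q⁻¹ ≠ 1 := by
    intro hcon
    apply hq2
    have : (q * q) * (q⁻¹ * q⁻¹) = 1 := by
      field_simp
    rw [hcon, mul_one] at this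
    exact this
  have hsum1 : ∑ i ∈ Finset.range m, (q⁻¹ * q⁻¹) ^ i = 0 := by
    rw [geom_sum_eq hqi2 m]
    have : (q⁻¹ * q⁻¹) ^ m = 1 := by
      rw [mul_pow, inv_pow, hqm, inv_one, one_mul]
    rw [this, sub_self, zero_div]
  -- F^m is central
  have hmsub : m - 1 + 1 = m := by omega
  have hEFm : E * F ^ m = F ^ m * E := by
    have h0 := Stmt12Aux.comm_pow hK2F hKi2F hEF (m - 1)
    rw [hmsub, hsum1, hsum2, zero_smul, zero_smul, sub_zero, mul_zero, smul_zero,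
      sub_eq_zero] at h0
    exact h0
  -- the defining relation of the swapped representation (q⁻¹, K, F, E)
  have hEF' : F * E - E * F = (q⁻¹ - (q⁻¹)⁻¹)⁻¹ • (K ^ 2 - K⁻¹ ^ 2) := by
    rw [inv_inv, show q⁻¹ - q = -(q - q⁻¹) by ring, inv_neg, neg_smul, ← hEF, neg_sub]
  -- E^m is central
  have hFEm : F * E ^ m = E ^ m * F := by
    have hK2E' : K ^ 2 * E = ((q⁻¹)⁻¹ * (q⁻¹)⁻¹) • (E * K ^ 2) := by rw [inv_inv]; exact hK2E
    have h0 := Stmt12Aux.comm_pow (q := q⁻¹) hK2E' hKi2E hEF' (m - 1)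
    rw [hmsub, inv_inv, hsum1, hsum2, zero_smul, zero_smul, sub_zero, mul_zero, smul_zero,
      sub_eq_zero] at h0
    exact h0
  -- Schur scalars for the central elements F^m and E^m
  have hqim : (q⁻¹ : ℂ) ^ m = 1 := by rw [inv_pow, hqm, inv_one]
  have hKFm : K * F ^ m = F ^ m * K := by
    rw [Stmt12Aux.K_pow_comm hKF m, hqim, one_smul]
  have hFFm : F ^ m * F = F * F ^ m := by rw [← pow_succ, ← pow_succ']
  obtain ⟨f, hf⟩ := Stmt12Aux.schur hN K E F (F ^ m) hirr hKFm.symm hEFm.symm hFFm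
  have hKEm : K * E ^ m = E ^ m * K := by
    rw [Stmt12Aux.K_pow_comm hKE m, hqm, one_smul]
  have hEEm : E ^ m * E = E * E ^ m := by rw [← pow_succ, ← pow_succ']
  obtain ⟨e, he⟩ := Stmt12Aux.schur hN K E F (E ^ m) hirr hKEm.symm hEEm hFEm.symm
  haveI : Nonempty (Fin N) := Fin.pos_iff_nonempty.mp hN
  rcases eq_or_ne f 0 with hf0 | hf0
  · -- F^m acts by 0 : F is nilpotent, take a K-eigenvector killed by F
    have hVne : LinearMap.ker F.mulVecLin ≠ ⊥ := by
      intro hbot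
      have hinj : Function.Injective F.mulVecLin := LinearMap.ker_eq_bot.mp hbot
      have hzero : ∀ j : ℕ, ∀ y : Fin N → ℂ, (F ^ j).mulVec y = 0 → y = 0 := by
        intro j
        induction j with
        | zero => intro y hy; simpa using hy
        | succ j ih =>
          intro y hy
          rw [pow_succ', ← mulVec_mulVec] at hy
          have hinj' : F.mulVecLin ((F ^ j).mulVec y) = F.mulVecLin 0 := by
            simpa [Matrix.mulVecLin_apply] using hy
          exact ih y (hinj hinj')
      obtain ⟨x, hx⟩ := exists_ne (0 : Fin N → ℂ)
      apply hx
      apply hzero m x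
      rw [hf x, hf0, zero_smul]
    have hFK : F * K = q • (K * F) := by
      rw [hKF, smul_smul, mul_inv_cancel₀ hq0, one_smul]
    have hkerK : ∀ x ∈ LinearMap.ker F.mulVecLin, K.mulVec x ∈ LinearMap.ker F.mulVecLin := by
      intro x hx
      rw [LinearMap.mem_ker, Matrix.mulVecLin_apply] at hx ⊢
      rw [mulVec_mulVec, hFK, smul_mulVec, ← mulVec_mulVec, hx, mulVec_zero, smul_zero]
    obtain ⟨v, hvmem, hv0, lam, hKv⟩ := Stmt12Aux.eig_in K _ hVne hkerK
    have hFv : F.mulVec v = 0 := by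
      simpa [Matrix.mulVecLin_apply] using (LinearMap.mem_ker.mp hvmem)
    have hKE' : K * E = (q⁻¹)⁻¹ • (E * K) := by rwa [inv_inv]
    have hirr' : ∀ W : Submodule ℂ (Fin N → ℂ), InvariantSub K F E W → W = ⊥ ∨ W = ⊤ :=
      fun W hW => hirr W ⟨hW.1, hW.2.2, hW.2.1⟩
    exact Stmt12Aux.chain hm1 (inv_ne_zero hq0) hK1 hKE' hEF' hirr' he hv0 hKv
      (by rw [hFv]; exact Submodule.zero_mem _)
  · -- F^m acts by f ≠ 0 : take a common eigenvector of K and F * E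
    obtain ⟨lam0, hlam0⟩ := Module.End.exists_eigenvalue K.mulVecLin
    set V := Module.End.eigenspace K.mulVecLin lam0 with hV
    have hKFE : K * (F * E) = (F * E) * K := by
      have h0 := Stmt12Aux.mul_comm_K hKF hKE
      rwa [inv_mul_cancel₀ hq0, one_smul] at h0
    have hVFE : ∀ x ∈ V, (F * E).mulVec x ∈ V := by
      intro x hx
      rw [hV, Module.End.mem_eigenspace_iff, Matrix.mulVecLin_apply] at hx ⊢
      rw [mulVec_mulVec, hKFE, ← mulVec_mulVec, hx, mulVec_smul]
    obtain ⟨v, hvmem, hv0, mu, hmu⟩ := Stmt12Aux.eig_in (F * E) V hlam0 hVFE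
    have hKv : K.mulVec v = lam0 • v := by
      rw [hV] at hvmem
      simpa [Matrix.mulVecLin_apply] using Module.End.mem_eigenspace_iff.mp hvmem
    have hFEv : F.mulVec (E.mulVec v) = mu • v := by
      rw [mulVec_mulVec]; exact hmu
    have hEv : E.mulVec v = (f⁻¹ * mu) • (F ^ (m-1)).mulVec v := by
      have h3 : (F ^ m).mulVec (E.mulVec v) = f • E.mulVec v := hf _
      have h4 : (F ^ m).mulVec (E.mulVec v) = mu • (F ^ (m-1)).mulVec v := by
        conv_lhs => rw [← hmsub]
        rw [pow_succ, ← mulVec_mulVec, hFEv, mulVec_smul]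
      have h5 : E.mulVec v = f⁻¹ • (mu • (F ^ (m-1)).mulVec v) := by
        rw [← h4, h3, smul_smul, inv_mul_cancel₀ hf0, one_smul]
      rw [h5, smul_smul]
    have hEvmem : E.mulVec v ∈
        Submodule.span ℂ (Set.range fun j : Fin m => (F ^ (j : ℕ)).mulVec v) := by
      rw [hEv]
      exact Submodule.smul_mem _ _ (Submodule.subset_span ⟨⟨m - 1, by omega⟩, rfl⟩)
    exact Stmt12Aux.chain hm1 hq0 hK1 hKF hEF hirr hf hv0 hKv hEvmem
end
end

section
/- Let m ≥ 3 and let q ∈ ℂ be a primitive m-th root of unity. For every λ ∈ ℂ with λ ≠ 0 and every α, β ∈ ℂ, the triple M(λ, α, β) of m×m matrices satisfies the defining relations of U_q(sl(2)): K·E·K⁻¹ = q·E, K·F·K⁻¹ = q⁻¹·F, and E·F − F·E = (K² − K⁻²)/(q − q⁻¹). -/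
open Matrix

noncomputable section

/-- The coefficient `c_p = (p)_q(λ² q^{1−p} − λ⁻² q^{p−1})/(q − q⁻¹) + αβ`. -/
def cCoeff (q lam α β : ℂ) (p : ℕ) : ℂ :=
  qint q p *
    ((lam ^ 2 * q ^ (1 - (p : ℤ)) - (lam⁻¹) ^ 2 * q ^ ((p : ℤ) - 1)) / (q - q⁻¹)) +
  α * β

/-- The `K` matrix of the module `M(λ, α, β)`: `K·v_p = λ q^{-p} v_p`. -/
def MK (q lam : ℂ) (m : ℕ) : Matrix (Fin m) (Fin m) ℂ :=
  Matrix.diagonal fun p => lam * q ^ (-(p : ℤ))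

/-- The `F` matrix of `M(λ, α, β)`: `F·v_p = v_{p+1}` for `p ≤ m−2`, `F·v_{m−1} = α·v_0`. -/
def MF (α : ℂ) (m : ℕ) : Matrix (Fin m) (Fin m) ℂ :=
  Matrix.of fun i j =>
    if (i : ℕ) = (j : ℕ) + 1 then 1
    else if (j : ℕ) = m - 1 ∧ (i : ℕ) = 0 then α
    else 0

/-- The `E` matrix of `M(λ, α, β)`: `E·v_0 = β·v_{m−1}` and `E·v_p = c_p·v_{p−1}`
for `1 ≤ p ≤ m−1`. -/
def ME (q lam α β : ℂ) (m : ℕ) : Matrix (Fin m) (Fin m) ℂ :=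
  Matrix.of fun i j =>
    if (j : ℕ) = (i : ℕ) + 1 then cCoeff q lam α β (j : ℕ)
    else if (j : ℕ) = 0 ∧ (i : ℕ) = m - 1 then β
    else 0

/-!
Write `σ = finRotate m` for the cyclic shift of indices. Both `F` and `E` are weighted permutation
matrices, for `σ` and `σ⁻¹` respectively, and `K` is diagonal with weights `d p = λ q^{-p}`; since
`q^m = 1` these satisfy `d (σ p) = q⁻¹ d p` also across the wrap-around `m - 1 ↦ 0`. Conjugating a
weighted permutation matrix by such a diagonal matrix rescales it by `q^{∓1}`. The products `EF` and
`FE` are diagonal with entries `c_{p+1}` and `c_p` (the wrap-around terms give `αβ = c_0 = c_m`), so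
the last relation reduces to the scalar identity `c_{p+1} - c_p = (d_p² - d_p⁻²)/(q - q⁻¹)`.
-/

section ShiftMatrix

variable {n R : Type*} [DecidableEq n]

def shiftMatrix [Zero R] (σ : Equiv.Perm n) (f : n → R) : Matrix n n R :=
  of fun i j => if i = σ j then f j else 0

theorem shiftMatrix_mul_shiftMatrix [Fintype n] [NonUnitalNonAssocSemiring R]
    (τ σ : Equiv.Perm n) (a b : n → R) :
    shiftMatrix τ a * shiftMatrix σ b = shiftMatrix (τ * σ) fun j => a (σ j) * b j := by
  ext i j
  simp only [shiftMatrix, mul_apply, of_apply, ite_mul, mul_ite, zero_mul, mul_zero,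
    Finset.sum_ite_eq', Finset.mem_univ, if_true, Equiv.Perm.mul_apply]
  rfl

theorem shiftMatrix_one [Zero R] (f : n → R) : shiftMatrix 1 f = diagonal f := by
  ext i j
  by_cases h : i = j <;> simp [shiftMatrix, h]

theorem shiftMatrix_inv_mul_shiftMatrix [Fintype n] [NonUnitalNonAssocSemiring R]
    (σ : Equiv.Perm n) (a b : n → R) :
    shiftMatrix σ⁻¹ a * shiftMatrix σ b = diagonal fun j => a (σ j) * b j := by
  rw [shiftMatrix_mul_shiftMatrix, inv_mul_cancel, shiftMatrix_one]

theorem shiftMatrix_mul_shiftMatrix_inv [Fintype n] [NonUnitalNonAssocSemiring R]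
    (σ : Equiv.Perm n) (a b : n → R) :
    shiftMatrix σ a * shiftMatrix σ⁻¹ b = diagonal fun j => a (σ⁻¹ j) * b j := by
  rw [shiftMatrix_mul_shiftMatrix, mul_inv_cancel, shiftMatrix_one]

theorem diagonal_mul_shiftMatrix_mul_diagonal_inv [Fintype n] [Field R] {d : n → R}
    (hd : ∀ j, d j ≠ 0) {σ : Equiv.Perm n} {c : R} (hσ : ∀ j, d (σ j) = c * d j) (f : n → R) :
    diagonal d * shiftMatrix σ f * diagonal d⁻¹ = c • shiftMatrix σ f := by
  ext i j
  simp only [diagonal_mul, mul_diagonal, shiftMatrix, of_apply, Matrix.smul_apply, smul_eq_mul,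
    Pi.inv_apply]
  split_ifs with h
  · rw [h, hσ]
    field_simp [hd j]
  · simp

end ShiftMatrix

theorem Matrix.inv_diagonal_of_ne_zero {n K : Type*} [Fintype n] [DecidableEq n] [Field K]
    {d : n → K} (hd : ∀ j, d j ≠ 0) : (diagonal d)⁻¹ = diagonal d⁻¹ := by
  refine inv_eq_right_inv ?_
  rw [diagonal_mul_diagonal, ← diagonal_one]
  congr 1
  ext j
  exact mul_inv_cancel₀ (hd j)

theorem MF_eq_shiftMatrix (α : ℂ) (n : ℕ) :
    MF α (n + 1) = shiftMatrix (finRotate (n + 1)) fun j => if j = Fin.last n then α else 1 := by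
  ext i j
  simp only [MF, shiftMatrix, of_apply, Fin.ext_iff, coe_finRotate, Fin.val_last,
    Nat.add_sub_cancel]
  split_ifs <;> first | rfl | omega

theorem ME_eq_shiftMatrix (q lam α β : ℂ) (n : ℕ) :
    ME q lam α β (n + 1) =
      shiftMatrix (finRotate (n + 1))⁻¹ fun j => if j = 0 then β else cCoeff q lam α β j := by
  ext i j
  simp only [ME, shiftMatrix, of_apply, Equiv.Perm.eq_inv_iff_eq, Fin.ext_iff, coe_finRotate,
    Fin.val_last, Fin.val_zero, Nat.add_sub_cancel]
  split_ifs <;> first | rfl | omega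

theorem cCoeff_zero (q lam α β : ℂ) : cCoeff q lam α β 0 = α * β := by
  simp [cCoeff, qint]

theorem cCoeff_of_pow_eq_one {q : ℂ} {m : ℕ} (hq : q ^ m = 1) (lam α β : ℂ) :
    cCoeff q lam α β m = α * β := by
  simp [cCoeff, qint, hq]

theorem cCoeff_succ_sub_cCoeff (q lam α β : ℂ) (p : ℕ) :
    cCoeff q lam α β (p + 1) - cCoeff q lam α β p =
      (q - q⁻¹)⁻¹ * ((lam * q ^ (-(p : ℤ))) ^ 2 - (lam * q ^ (-(p : ℤ)))⁻¹ ^ 2) := by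
  by_cases hd : q - q⁻¹ = 0
  · -- both sides are `x / 0 = 0` junk
    simp [cCoeff, hd]
  have hq : q ≠ 0 := by rintro rfl; simp at hd
  unfold cCoeff qint
  push_cast
  simp only [zpow_add₀ hq, zpow_sub₀ hq, _root_.zpow_neg, zpow_natCast, zpow_one, mul_inv, inv_inv]
  generalize lam⁻¹ = μ
  have hq2 : q ^ 2 - 1 ≠ 0 := by
    contrapose! hd
    field_simp
    linear_combination hd
  field_simp
  ring

theorem zpow_neg_finRotate {K : Type*} [Field K] {q : K} {n : ℕ} (hq : q ^ (n + 1) = 1)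
    (j : Fin (n + 1)) : q ^ (-(finRotate (n + 1) j : ℤ)) = q⁻¹ * q ^ (-(j : ℤ)) := by
  have hq0 : q ≠ 0 := by rintro rfl; simp at hq
  rw [coe_finRotate]
  split_ifs with hj
  · simp only [hj, Fin.val_last, Nat.cast_zero, neg_zero, zpow_zero, _root_.zpow_neg,
      zpow_natCast]
    rw [← mul_inv, ← pow_succ', hq, inv_one]
  · push_cast
    rw [neg_add, zpow_add₀ hq0, _root_.zpow_neg_one, mul_comm]

theorem ME_mul_MF {q : ℂ} {n : ℕ} (hq : q ^ (n + 1) = 1) (lam α β : ℂ) :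
    ME q lam α β (n + 1) * MF α (n + 1) =
      diagonal fun j : Fin (n + 1) => cCoeff q lam α β (j + 1) := by
  rw [ME_eq_shiftMatrix, MF_eq_shiftMatrix, shiftMatrix_inv_mul_shiftMatrix]
  congr 1
  ext j
  by_cases hj : j = Fin.last n
  · simp only [hj, finRotate_last, if_true, Fin.val_last, cCoeff_of_pow_eq_one hq, mul_comm]
  · have hval := coe_finRotate_of_ne_last hj
    have hσ : finRotate _ j ≠ 0 := by
      rw [Ne, Fin.ext_iff, hval]
      exact Nat.succ_ne_zero _
    simp only [if_neg hj, if_neg hσ, hval, mul_one]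

theorem MF_mul_ME (q lam α β : ℂ) (n : ℕ) :
    MF α (n + 1) * ME q lam α β (n + 1) = diagonal fun j : Fin (n + 1) => cCoeff q lam α β j := by
  rw [ME_eq_shiftMatrix, MF_eq_shiftMatrix, shiftMatrix_mul_shiftMatrix_inv]
  congr 1
  ext j
  by_cases hj : j = 0
  · have hσ : (finRotate (n + 1))⁻¹ 0 = Fin.last n :=
      Equiv.Perm.inv_eq_iff_eq.mpr finRotate_last.symm
    simp only [hj, hσ, if_true, Fin.val_zero, cCoeff_zero]
  · have hσ : (finRotate (n + 1))⁻¹ j ≠ Fin.last n := by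
      rwa [Ne, Equiv.Perm.inv_eq_iff_eq, finRotate_last]
    simp only [if_neg hj, if_neg hσ, one_mul]

/-- For `q` a primitive `m`-th root of unity (`m ≥ 3`), `λ ≠ 0` and any `α, β`, the triple
`M(λ, α, β)` satisfies the defining relations of `U_q(sl(2))`. -/
theorem stmt13 (m : ℕ) (hm : 3 ≤ m) (q : ℂ) (hq : IsPrimitiveRoot q m)
    (lam α β : ℂ) (hlam : lam ≠ 0) :
    IsRep q (MK q lam m) (ME q lam α β m) (MF α m) := by
  obtain ⟨n, rfl⟩ : ∃ n, m = n + 1 := ⟨m - 1, by omega⟩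
  have hqm : q ^ (n + 1) = 1 := hq.pow_eq_one
  have hq0 : q ≠ 0 := by rintro rfl; simp at hqm
  set d : Fin (n + 1) → ℂ := fun p => lam * q ^ (-(p : ℤ))
  have hd : ∀ p, d p ≠ 0 := fun p => mul_ne_zero hlam (zpow_ne_zero _ hq0)
  have hdF : ∀ j, d (finRotate _ j) = q⁻¹ * d j := fun j => by
    simp only [d, zpow_neg_finRotate hqm]; ring
  have hdE : ∀ j, d ((finRotate _)⁻¹ j) = q * d j := fun j => by
    obtain ⟨k, rfl⟩ := (finRotate (n + 1)).surjective j
    simp only [Equiv.Perm.coe_inv, Equiv.symm_apply_apply, hdF]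
    field_simp
  have hK : MK q lam (n + 1) = diagonal d := rfl
  refine ⟨isUnit_diagonal.mpr (Pi.isUnit_iff.mpr fun p => (hd p).isUnit), ?_, ?_, ?_⟩
  · rw [hK, inv_diagonal_of_ne_zero hd, ME_eq_shiftMatrix]
    exact diagonal_mul_shiftMatrix_mul_diagonal_inv hd hdE _
  · rw [hK, inv_diagonal_of_ne_zero hd, MF_eq_shiftMatrix]
    exact diagonal_mul_shiftMatrix_mul_diagonal_inv hd hdF _
  · rw [ME_mul_MF hqm, MF_mul_ME, hK, inv_diagonal_of_ne_zero hd, diagonal_pow, diagonal_pow,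
      diagonal_sub, diagonal_sub, ← diagonal_smul]
    congr 1
    ext j
    exact cCoeff_succ_sub_cCoeff q lam α β j
end
end

section
/- Let m ≥ 3 and let q ∈ ℂ be a primitive m-th root of unity, and let λ ∈ ℂ with λ² = 1. Define (m+1)×(m+1) matrices K, E, F acting on the standard basis v_0, …, v_m of ℂ^{m+1} by: K·v_p = λ q^{−p}·v_p for 0 ≤ p ≤ m; F·v_p = v_{p+1} for 0 ≤ p ≤ m−1 and F·v_m = 0; E·v_0 = 0 and E·v_p = (p)_q·(1−p)_q·v_{p−1} for 1 ≤ p ≤ m. Then: (i) (K, E, F) is a representation of U_q(sl(2)); (ii) the line ℂ·v_m is invariant under K, E and F; (iii) this representation is not completely reducible: there is no linear subspace W of ℂ^{m+1} invariant under K, E and F with ℂ^{m+1} = ℂ·v_m ⊕ W. -/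
/-!
In the basis `v_p`, `K` is diagonal and `E`, `F` are weighted shifts, so the relations reduce to
entrywise identities. Conjugation by `K` rescales the entries `(i, i + 1)` and `(i + 1, i)` by `q`
and `q⁻¹`. The commutator `[E, F]` is diagonal with entries `c (p + 1) - c p`, where
`c p = (p)_q (1 - p)_q`, and `c (p + 1) - c p = (-2p)_q`, which for `λ² = 1` is the entry of
`(K² - K⁻²)/(q - q⁻¹)`. At the two ends this needs `c 0 = 0` and `c (m + 1) = (m + 1)_q (-m)_q = 0`,
the latter because `q ^ m = 1`.

`K` acts on `v_m` by `λ` and on `v_{m-1}` by `λ q ≠ λ`, so a `K`-invariant complement `W` of `ℂ v_m`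
must contain the eigenvector `v_{m-1}`. If `W` is also `F`-invariant it contains `F v_{m-1} = v_m`,
which is impossible.
-/

open Matrix

noncomputable section

/-- The `K` matrix of the non completely reducible `(m+1)`-dimensional module:
`K·v_p = λ q^{-p} v_p`. -/
def XK (q lam : ℂ) (m : ℕ) : Matrix (Fin (m + 1)) (Fin (m + 1)) ℂ :=
  Matrix.diagonal fun p => lam * q ^ (-(p : ℤ))

/-- Its `F` matrix: `F·v_p = v_{p+1}` for `p ≤ m−1`, `F·v_m = 0`. -/
def XF (m : ℕ) : Matrix (Fin (m + 1)) (Fin (m + 1)) ℂ :=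
  Matrix.of fun i j => if (i : ℕ) = (j : ℕ) + 1 then 1 else 0

/-- Its `E` matrix: `E·v_0 = 0`, `E·v_p = (p)_q (1−p)_q v_{p−1}` for `1 ≤ p ≤ m`. -/
def XE (q : ℂ) (m : ℕ) : Matrix (Fin (m + 1)) (Fin (m + 1)) ℂ :=
  Matrix.of fun i j =>
    if (j : ℕ) = (i : ℕ) + 1 then qint q (j : ℕ) * qint q (1 - (j : ℕ) : ℤ) else 0

theorem qint_eq_zero_of_zpow_eq_one {q : ℂ} {p : ℤ} (h : q ^ p = 1) : qint q p = 0 := by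
  simp [qint, _root_.zpow_neg, h]

theorem qint_add_one_mul_qint_neg_sub_qint_mul_qint_one_sub (q : ℂ) (p : ℤ) :
    qint q (p + 1) * qint q (-p) - qint q p * qint q (1 - p) = qint q (-2 * p) := by
  rcases eq_or_ne (q - q⁻¹) 0 with hd | hd
  · simp [qint, hd]
  have hq : q ≠ 0 := by rintro rfl; simp at hd
  have hu : q ^ p ≠ 0 := zpow_ne_zero p hq
  simp only [qint, div_mul_div_comm, div_sub_div_same, div_eq_div_iff (mul_ne_zero hd hd) hd]
  simp only [zpow_add₀ hq, zpow_sub₀ hq, _root_.zpow_neg, zpow_one, neg_neg, neg_add,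
    neg_sub, show -2 * p = -p + -p by ring]
  generalize q ^ p = u at hu ⊢
  field_simp
  ring

namespace Matrix

variable {n K : Type*} [Fintype n] [DecidableEq n] [Field K]

theorem inv_diagonal_of_ne_zero_s17 {d : n → K} (hd : ∀ i, d i ≠ 0) :
    (diagonal d)⁻¹ = diagonal fun i => (d i)⁻¹ :=
  inv_eq_left_inv <| by simp [diagonal_mul_diagonal, inv_mul_cancel₀ (hd _)]

theorem diagonal_mul_mul_inv_diagonal_eq_smul {d : n → K} (hd : ∀ i, d i ≠ 0)
    {A : Matrix n n K} {c : K} (h : ∀ i j, A i j ≠ 0 → d i = c * d j) :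
    diagonal d * A * (diagonal d)⁻¹ = c • A := by
  ext i j
  rw [inv_diagonal_of_ne_zero_s17 hd, mul_diagonal, diagonal_mul, smul_apply, smul_eq_mul]
  by_cases hA : A i j = 0
  · simp [hA]
  · rw [h i j hA]
    field_simp [hd j]

end Matrix

theorem Submodule.mem_of_isCompl_span_singleton {K V : Type*} [Field K] [AddCommGroup V]
    [Module K V] {f : Module.End K V} {W : Submodule K V} {u v : V} (hW : ∀ w ∈ W, f w ∈ W)
    (hc : IsCompl (K ∙ v) W) {μ ν : K} (hv : f v = μ • v) (hu : f u = ν • u) (hμν : μ ≠ ν) :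
    u ∈ W := by
  obtain ⟨_, hx, w, hw, rfl⟩ := mem_sup.mp (hc.sup_eq_top ▸ mem_top (x := u))
  obtain ⟨t, rfl⟩ := mem_span_singleton.mp hx
  have : (t * (μ - ν)) • v ∈ (K ∙ v) ⊓ W := by
    refine ⟨smul_mem _ _ (mem_span_singleton_self v), ?_⟩
    have : (t * (μ - ν)) • v = -(f w - ν • w) := by
      rw [map_add, map_smul, hv, smul_add] at hu
      rw [mul_sub, sub_smul, mul_smul, mul_smul]
      linear_combination (norm := module) hu
    rw [this]
    exact W.neg_mem (W.sub_mem (hW w hw) (W.smul_mem ν hw))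
  have htv : t • v = 0 := by
    rw [hc.inf_eq_bot, mem_bot, mul_comm, mul_smul, smul_eq_zero] at this
    exact this.resolve_left (sub_ne_zero.mpr hμν)
  rwa [htv, zero_add]

theorem invariantSub_span_singleton {N : ℕ} {K E F : Matrix (Fin N) (Fin N) ℂ} {v : Fin N → ℂ}
    (hK : K *ᵥ v ∈ ℂ ∙ v) (hE : E *ᵥ v ∈ ℂ ∙ v) (hF : F *ᵥ v ∈ ℂ ∙ v) :
    InvariantSub K E F (ℂ ∙ v) := by
  have key {M : Matrix (Fin N) (Fin N) ℂ} (hM : M *ᵥ v ∈ ℂ ∙ v) : ∀ w ∈ ℂ ∙ v, M *ᵥ w ∈ ℂ ∙ v := by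
    intro w hw
    obtain ⟨t, rfl⟩ := Submodule.mem_span_singleton.mp hw
    rw [mulVec_smul]
    exact Submodule.smul_mem _ t hM
  exact ⟨key hK, key hE, key hF⟩

def weightedShift (m : ℕ) (c : ℕ → ℂ) : Matrix (Fin (m + 1)) (Fin (m + 1)) ℂ :=
  Matrix.of fun i j => if (j : ℕ) = (i : ℕ) + 1 then c j else 0

theorem XE_eq_weightedShift (q : ℂ) (m : ℕ) :
    XE q m = weightedShift m fun p => qint q p * qint q (1 - p) := rfl

theorem weightedShift_mul_XF_apply (m : ℕ) (c : ℕ → ℂ) (i j : Fin (m + 1)) :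
    (weightedShift m c * XF m) i j = if i = j ∧ (i : ℕ) < m then c (i + 1) else 0 := by
  simp only [mul_apply, weightedShift, XF, of_apply, mul_ite, mul_one, mul_zero]
  rw [Fin.sum_univ_eq_sum_range
    (fun k => if k = (j : ℕ) + 1 then if k = (i : ℕ) + 1 then c k else 0 else 0)]
  by_cases hij : i = j
  · subst hij; simp
  · simp [Fin.val_inj, hij, Ne.symm hij]

theorem XF_mul_weightedShift_apply (m : ℕ) (c : ℕ → ℂ) (i j : Fin (m + 1)) :
    (XF m * weightedShift m c) i j = if i = j ∧ 1 ≤ (i : ℕ) then c i else 0 := by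
  simp only [mul_apply, weightedShift, XF, of_apply, ite_mul, one_mul, zero_mul]
  rw [Fin.sum_univ_eq_sum_range
    (fun k => if (i : ℕ) = k + 1 then if (j : ℕ) = k + 1 then c j else 0 else 0),
    Finset.range_eq_Ico,
    Finset.sum_Ico_add' (fun k => if (i : ℕ) = k then if (j : ℕ) = k then c j else 0 else 0)]
  by_cases hij : i = j
  · subst hij; simp
  · simp [Fin.val_inj, hij, Ne.symm hij]

theorem weightedShift_mul_XF_sub {m : ℕ} {c : ℕ → ℂ} (h0 : c 0 = 0) (hm : c (m + 1) = 0) :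
    weightedShift m c * XF m - XF m * weightedShift m c =
      diagonal fun i : Fin (m + 1) => c (i + 1) - c i := by
  ext i j
  rw [Matrix.sub_apply, weightedShift_mul_XF_apply, XF_mul_weightedShift_apply, diagonal_apply]
  by_cases hij : i = j
  · subst hij
    have := i.isLt
    simp only [true_and, if_true]
    split_ifs with him hi
    · rfl
    · simp [show (i : ℕ) = 0 by omega, h0]
    · simp [show (i : ℕ) = m by omega, hm]
    · obtain rfl : m = 0 := by omega
      simp [h0, hm]
  · simp [hij]

section Representation

variable {q lam : ℂ} {m : ℕ}

theorem XK_diag_ne_zero (hq : q ≠ 0) (hlam : lam ≠ 0) (p : Fin (m + 1)) :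
    lam * q ^ (-(p : ℤ)) ≠ 0 :=
  mul_ne_zero hlam (zpow_ne_zero _ hq)

theorem XK_mul_XE_mul_XK_inv (hq : q ≠ 0) (hlam : lam ≠ 0) :
    XK q lam m * XE q m * (XK q lam m)⁻¹ = q • XE q m := by
  refine diagonal_mul_mul_inv_diagonal_eq_smul (XK_diag_ne_zero hq hlam) fun i j hij => ?_
  have hj : (j : ℤ) = i + 1 := by
    by_contra h
    exact hij (if_neg (by omega))
  rw [hj, neg_add, zpow_add₀ hq, _root_.zpow_neg_one]
  field_simp

theorem XK_mul_XF_mul_XK_inv (hq : q ≠ 0) (hlam : lam ≠ 0) :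
    XK q lam m * XF m * (XK q lam m)⁻¹ = q⁻¹ • XF m := by
  refine diagonal_mul_mul_inv_diagonal_eq_smul (XK_diag_ne_zero hq hlam) fun i j hij => ?_
  have hi : (i : ℤ) = j + 1 := by
    by_contra h
    exact hij (if_neg (by omega))
  rw [hi, neg_add, zpow_add₀ hq, _root_.zpow_neg_one]
  ring

theorem smul_XK_sq_sub_XK_inv_sq (hq : q ≠ 0) (hlam : lam ^ 2 = 1) :
    (q - q⁻¹)⁻¹ • (XK q lam m ^ 2 - (XK q lam m)⁻¹ ^ 2) =
      diagonal fun p : Fin (m + 1) => qint q (-2 * p) := by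
  have hlam0 : lam ≠ 0 := (IsUnit.of_pow_eq_one hlam two_ne_zero).ne_zero
  rw [XK, inv_diagonal_of_ne_zero_s17 (XK_diag_ne_zero hq hlam0), diagonal_pow, diagonal_pow,
    diagonal_sub, ← diagonal_smul]
  congr 1
  ext p
  have hsq : (q ^ (-(p : ℤ))) ^ 2 = q ^ (-2 * (p : ℤ)) := by
    rw [← zpow_natCast, ← _root_.zpow_mul]
    ring_nf
  simp only [Pi.smul_apply, Pi.pow_apply, smul_eq_mul, qint, mul_pow, inv_pow, hsq, hlam,
    one_mul, _root_.zpow_neg (n := -2 * (p : ℤ))]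
  ring

theorem isRep_XK_XE_XF (hq : q ≠ 0) (hqm : q ^ m = 1) (hlam : lam ^ 2 = 1) :
    IsRep q (XK q lam m) (XE q m) (XF m) := by
  have hlam0 : lam ≠ 0 := (IsUnit.of_pow_eq_one hlam two_ne_zero).ne_zero
  refine ⟨(isUnit_diagonal).mpr (Pi.isUnit_iff.mpr fun p => (XK_diag_ne_zero hq hlam0 p).isUnit),
    XK_mul_XE_mul_XK_inv hq hlam0, XK_mul_XF_mul_XK_inv hq hlam0, ?_⟩
  rw [smul_XK_sq_sub_XK_inv_sq hq hlam, XE_eq_weightedShift, weightedShift_mul_XF_sub]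
  · congr 1
    ext p
    push_cast
    rw [show (1 : ℤ) - (p + 1) = -p by ring, qint_add_one_mul_qint_neg_sub_qint_mul_qint_one_sub]
  · simp [qint]
  · rw [Nat.cast_add_one, show (1 : ℤ) - (m + 1) = -m by ring,
      qint_eq_zero_of_zpow_eq_one (q := q) (p := -m) (by simp [hqm]), mul_zero]

end Representation

section Vectors

variable {q lam : ℂ} {m : ℕ}

theorem XK_mulVec_single (p : Fin (m + 1)) :
    XK q lam m *ᵥ Pi.single p 1 = (lam * q ^ (-(p : ℤ))) • Pi.single p 1 := by
  rw [XK, diagonal_mulVec_single, ← smul_eq_mul, Pi.single_smul]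

theorem XE_mulVec_single_last (hqm : q ^ m = 1) : XE q m *ᵥ Pi.single (Fin.last m) 1 = 0 := by
  have hm : qint q m = 0 := qint_eq_zero_of_zpow_eq_one (by rw [zpow_natCast, hqm])
  ext i
  simp [XE, hm]

theorem XF_mulVec_single_last : XF m *ᵥ Pi.single (Fin.last m) 1 = 0 := by
  ext i
  simp [XF]
  omega

theorem XF_mulVec_single {i j : Fin (m + 1)} (h : (j : ℕ) = i + 1) :
    XF m *ᵥ Pi.single i 1 = Pi.single j 1 := by
  ext k
  simp [XF, Pi.single_apply, Fin.ext_iff, h]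

end Vectors

/-- For `q` a primitive `m`-th root of unity (`m ≥ 3`) and `λ² = 1`, the triple
`(XK, XE, XF)` is an `(m+1)`-dimensional representation of `U_q(sl(2))`, the line `ℂ·v_m`
is an invariant subspace, and this representation is not completely reducible: no invariant
subspace `W` is a complement of `ℂ·v_m` in `ℂ^{m+1}`. -/
theorem stmt17 (m : ℕ) (hm : 3 ≤ m) (q : ℂ) (hq : IsPrimitiveRoot q m)
    (lam : ℂ) (hlam : lam ^ 2 = 1) :
    IsRep q (XK q lam m) (XE q m) (XF m) ∧
    InvariantSub (XK q lam m) (XE q m) (XF m)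
      (Submodule.span ℂ {Pi.single (Fin.last m) (1 : ℂ)}) ∧
    ¬ ∃ W : Submodule ℂ (Fin (m + 1) → ℂ),
        InvariantSub (XK q lam m) (XE q m) (XF m) W ∧
        IsCompl (Submodule.span ℂ {Pi.single (Fin.last m) (1 : ℂ)}) W := by
  have hq0 : q ≠ 0 := hq.ne_zero (by omega)
  have hqm : q ^ (-(m : ℤ)) = 1 := by simp [hq.pow_eq_one]
  set v : Fin (m + 1) → ℂ := Pi.single (Fin.last m) 1
  have hKv : XK q lam m *ᵥ v = lam • v := by
    rw [XK_mulVec_single, Fin.val_last, hqm, mul_one]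
  refine ⟨isRep_XK_XE_XF hq0 hq.pow_eq_one hlam,
    invariantSub_span_singleton (Submodule.mem_span_singleton.mpr ⟨lam, hKv.symm⟩)
      (XE_mulVec_single_last hq.pow_eq_one ▸ zero_mem _) (XF_mulVec_single_last ▸ zero_mem _), ?_⟩
  rintro ⟨W, ⟨hWK, -, hWF⟩, hc⟩
  let u : Fin (m + 1) := ⟨m - 1, by omega⟩
  have hKu : q ^ (-(u : ℤ)) = q := by
    rw [show -((u : ℕ) : ℤ) = 1 + -(m : ℤ) by simp [u]; omega, zpow_add₀ hq0, hqm, zpow_one,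
      mul_one]
  have hlam0 : lam ≠ 0 := (IsUnit.of_pow_eq_one hlam two_ne_zero).ne_zero
  have hne : lam ≠ lam * q := fun h =>
    hq.ne_one (by omega) (mul_left_cancel₀ hlam0 (by rw [mul_one, ← h]))
  have hu : Pi.single u 1 ∈ W :=
    Submodule.mem_of_isCompl_span_singleton (f := mulVecLin (XK q lam m)) hWK hc hKv
      (XK_mulVec_single u) (by rwa [hKu])
  have hFu : XF m *ᵥ Pi.single u 1 = v := XF_mulVec_single (by simp [u]; omega)
  have hv : v ∈ W := hFu ▸ hWF _ hu
  simpa [v] using Submodule.disjoint_def.mp hc.disjoint v (Submodule.mem_span_singleton_self v) hv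
end
end
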